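/- arXiv:1706.05676 — 6 statements merged into one kernel-verified Lean document; each statement's English description precedes it below -/
import Mathlib

section
/- Let u ∈ H¹(ℝⁿ) (real or complex valued) and for k < n define μ_k(x) = ∫_{ℝ^{n-k}} |u(x,y)|² dy for x ∈ ℝ^k. Then √μ_k ∈ H¹(ℝ^k) and ∫_{ℝ^k} |∇√μ_k|² ≤ ∫_{ℝⁿ} |∇_x u(x,y)|² dx dy (Hoffmann-Ostenhof inequality). -/
/-!
Write `s x = ‖u (x, ·)‖_{L²}`, so that `√μ_k = s`, and `H x = ∫ ‖∇ₓu (x, y)‖² dy`. The reverse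
triangle inequality in `L²(dy)`, the fundamental theorem of calculus along `[x, x + v]` and
Cauchy–Schwarz give `|s (x + v) - s x|² ≤ ‖v‖² ∫₀¹ H (x + t v) dt`. Replacing `v` by `v / n`,
integrating over a set `A` and letting `n → ∞` (Fatou on the left, continuity of translations
in `L¹` on the right) gives `∫_A |∂ᵥs|² ≤ ‖v‖² ∫_A H` for every `A`, hence `|∂ᵥs|² ≤ ‖v‖² H`
almost everywhere. Letting `v` run through a countable dense set yields `‖Ds‖² ≤ H` a.e.,
which integrates to the inequality.
-/

open MeasureTheory Filter Topology ENNReal Set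

lemma eLpNorm_two_sq {α ε : Type*} [MeasurableSpace α] [TopologicalSpace ε] [ContinuousENorm ε]
    (μ : Measure α) (f : α → ε) : eLpNorm f 2 μ ^ 2 = ∫⁻ x, ‖f x‖ₑ ^ 2 ∂μ := by
  simpa using eLpNorm_nnreal_pow_eq_lintegral (μ := μ) (f := f) (p := 2) two_ne_zero

lemma enorm_toReal_sub_toReal_le {a b c : ℝ≥0∞} (hab : a ≤ b + c) (hba : b ≤ a + c) :
    ‖a.toReal - b.toReal‖ₑ ≤ c := by
  rcases eq_or_ne c ∞ with rfl | hc
  · exact le_top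
  rcases eq_or_ne a ∞ with rfl | ha
  · have : b = ∞ := by simpa [hc] using hab
    simp [this]
  have hb : b ≠ ∞ := ne_top_of_le_ne_top (by finiteness) hba
  rw [← ofReal_norm, ← ENNReal.ofReal_toReal hc, Real.norm_eq_abs]
  refine ENNReal.ofReal_le_ofReal (abs_sub_le_iff.mpr ⟨?_, ?_⟩)
  · have := ENNReal.toReal_mono (by finiteness) hab
    rw [ENNReal.toReal_add hb hc] at this; linarith
  · have := ENNReal.toReal_mono (by finiteness) hba
    rw [ENNReal.toReal_add ha hc] at this; linarith

lemma sq_lintegral_le_lintegral_sq {α : Type*} [MeasurableSpace α] (μ : Measure α)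
    [IsProbabilityMeasure μ] {f : α → ℝ≥0∞} (hf : AEMeasurable f μ) :
    (∫⁻ x, f x ∂μ) ^ 2 ≤ ∫⁻ x, f x ^ 2 ∂μ := by
  have h := eLpNorm_le_eLpNorm_of_exponent_le (μ := μ) (p := 1) (q := 2) one_le_two
    hf.aestronglyMeasurable
  rw [eLpNorm_one_eq_lintegral_enorm] at h
  calc (∫⁻ x, f x ∂μ) ^ 2 ≤ eLpNorm f 2 μ ^ 2 := pow_le_pow_left' (by simpa using h) 2
    _ = ∫⁻ x, f x ^ 2 ∂μ := by simp [eLpNorm_two_sq]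

lemma ContinuousLinearMap.opNorm_le_of_dense {E F : Type*} [NormedAddCommGroup E]
    [NormedSpace ℝ E] [NormedAddCommGroup F] [NormedSpace ℝ F] {L : E →L[ℝ] F} {C : ℝ}
    (hC : 0 ≤ C) {D : Set E} (hD : Dense D) (h : ∀ v ∈ D, ‖L v‖ ≤ C * ‖v‖) : ‖L‖ ≤ C :=
  L.opNorm_le_bound hC fun v =>
    closure_minimal h (isClosed_le (by fun_prop : Continuous fun w => ‖L w‖)
      (by fun_prop : Continuous fun w => C * ‖w‖)) (hD.closure_eq ▸ mem_univ v)

lemma enorm_fderiv_apply_sq_le_liminf {E F : Type*} [NormedAddCommGroup E] [NormedSpace ℝ E]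
    [NormedAddCommGroup F] [NormedSpace ℝ F] (s : E → F) (x v : E) :
    ‖fderiv ℝ s x v‖ₑ ^ 2 ≤
      liminf (fun n : ℕ => ‖((n : ℝ) + 1) • (s (x + ((n : ℝ) + 1)⁻¹ • v) - s x)‖ₑ ^ 2) atTop := by
  by_cases hs : DifferentiableAt ℝ s x
  · have hc : Tendsto (fun n : ℕ => ‖(n : ℝ) + 1‖) atTop atTop :=
      tendsto_norm_atTop_atTop.comp
        (tendsto_atTop_add_const_right _ 1 (tendsto_natCast_atTop_atTop (R := ℝ)))
    exact ((ENNReal.continuous_pow 2).tendsto _).comp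
      ((continuous_enorm.tendsto _).comp (hs.hasFDerivAt.lim v hc)) |>.liminf_eq.ge
  · simp [fderiv_zero_of_not_differentiableAt hs]

lemma integral_norm_sq_eq_toReal_lintegral {α G : Type*} [MeasurableSpace α]
    [NormedAddCommGroup G] {μ : Measure α} {f : α → G} (hf : AEStronglyMeasurable f μ) :
    ∫ x, ‖f x‖ ^ 2 ∂μ = (∫⁻ x, ‖f x‖ₑ ^ 2 ∂μ).toReal := by
  simp_rw [← toReal_enorm, ← ENNReal.toReal_pow]
  exact integral_toReal (hf.enorm.pow_const 2) (ae_of_all _ fun x => by finiteness)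

section DirectionalDerivative

variable {E : Type*} [NormedAddCommGroup E] [NormedSpace ℝ E] [FiniteDimensional ℝ E]
  [MeasurableSpace E] [BorelSpace E] {μ : Measure E} [μ.IsAddHaarMeasure]
  {H : E → ℝ≥0∞}

lemma tendsto_setLIntegral_comp_add_nhds_zero (hH : Measurable H) (hHfin : ∫⁻ x, H x ∂μ ≠ ∞)
    (A : Set E) :
    Tendsto (fun w => ∫⁻ x in A, H (x + w) ∂μ) (𝓝 0) (𝓝 (∫⁻ x in A, H x ∂μ)) := by
  have : Fact ((1 : ℝ≥0∞) ≤ 1) := ⟨le_rfl⟩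
  have hh : Integrable (fun x => (H x).toReal) μ :=
    integrable_toReal_of_lintegral_ne_top hH.aemeasurable hHfin
  let shift : E → C(E, E) := (⟨fun p : E × E => p.2 + p.1, by fun_prop⟩ : C(E × E, E)).curry
  have hshift (w : E) : MeasurePreserving (shift w) μ μ := measurePreserving_add_right μ w
  let T (w : E) : E →₁[μ] ℝ := Lp.compMeasurePreserving (shift w) (hshift w) (hh.toL1 _)
  have hT : Continuous T :=
    continuous_const.compMeasurePreservingLp (map_continuous _) hshift one_ne_top
  have hψ (w : E) : ∫⁻ x in A, H (x + w) ∂μ = ENNReal.ofReal (∫ x in A, T w x ∂μ) := by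
    have hTw : T w =ᵐ[μ] fun x => (H (x + w)).toReal :=
      (Lp.coeFn_compMeasurePreserving _ _).trans
        ((hshift w).quasiMeasurePreserving.ae_eq_comp hh.coeFn_toL1)
    have hfin : ∀ᵐ x ∂μ, H (x + w) < ∞ :=
      (hshift w).quasiMeasurePreserving.ae (ae_lt_top hH hHfin)
    rw [integral_congr_ae (ae_restrict_of_ae hTw),
      integral_toReal (f := fun x => H (x + w)) (hH.comp (measurable_add_const w)).aemeasurable
        (ae_restrict_of_ae hfin),
      ENNReal.ofReal_toReal]
    refine ne_top_of_le_ne_top hHfin ((setLIntegral_le_lintegral _ _).trans_eq ?_)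
    exact lintegral_add_right_eq_self H w
  have hψ0 : ∫⁻ x in A, H x ∂μ = ENNReal.ofReal (∫ x in A, T 0 x ∂μ) := by simpa using hψ 0
  simp_rw [hψ, hψ0]
  exact (ENNReal.continuous_ofReal.comp ((continuous_setIntegral A).comp hT)).tendsto 0

lemma tendsto_lintegral_Icc_setLIntegral_comp_add_smul (hH : Measurable H)
    (hHfin : ∫⁻ x, H x ∂μ ≠ ∞) (A : Set E) (v : E) {τ : ℕ → ℝ} (hτ : Tendsto τ atTop (𝓝 0)) :
    Tendsto (fun n => ∫⁻ r in Icc (0 : ℝ) 1, ∫⁻ x in A, H (x + (r * τ n) • v) ∂μ) atTop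
      (𝓝 (∫⁻ x in A, H x ∂μ)) := by
  have hlim := tendsto_lintegral_of_dominated_convergence (μ := volume.restrict (Icc (0 : ℝ) 1))
    (fun _ => ∫⁻ x, H x ∂μ) (F := fun n r => ∫⁻ x in A, H (x + (r * τ n) • v) ∂μ)
    (f := fun _ => ∫⁻ x in A, H x ∂μ) (fun n => ?_) (fun n => ?_) (by simpa using hHfin) ?_
  · simpa using hlim
  · exact (hH.comp (measurable_snd.add
      ((measurable_fst.mul_const _).smul_const v))).lintegral_prod_right'
  · refine Eventually.of_forall fun r => (setLIntegral_le_lintegral _ _).trans_eq ?_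
    exact lintegral_add_right_eq_self H _
  · refine Eventually.of_forall fun r =>
      (tendsto_setLIntegral_comp_add_nhds_zero hH hHfin A).comp ?_
    simpa using ((hτ.const_mul r).smul_const v)

lemma setLIntegral_enorm_fderiv_apply_sq_le {s : E → ℝ} (hs : Measurable s) (hH : Measurable H)
    (hHfin : ∫⁻ x, H x ∂μ ≠ ∞)
    (hsH : ∀ x v, ‖s (x + v) - s x‖ₑ ^ 2 ≤ ‖v‖ₑ ^ 2 * ∫⁻ t in Icc (0 : ℝ) 1, H (x + t • v))
    (v : E) (A : Set E) :
    ∫⁻ x in A, ‖fderiv ℝ s x v‖ₑ ^ 2 ∂μ ≤ ‖v‖ₑ ^ 2 * ∫⁻ x in A, H x ∂μ := by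
  set q : ℕ → E → ℝ≥0∞ := fun n x => ‖((n : ℝ) + 1) • (s (x + ((n : ℝ) + 1)⁻¹ • v) - s x)‖ₑ ^ 2
  have hq_meas (n : ℕ) : Measurable (q n) := by fun_prop
  have hq_le (n : ℕ) : ∫⁻ x in A, q n x ∂μ ≤ ‖v‖ₑ ^ 2 *
      ∫⁻ r in Icc (0 : ℝ) 1, ∫⁻ x in A, H (x + (r * ((n : ℝ) + 1)⁻¹) • v) ∂μ := by
    set c : ℝ := (n : ℝ) + 1
    have hc : ‖c‖ₑ * ‖c⁻¹‖ₑ = 1 := by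
      rw [← enorm_mul, mul_inv_cancel₀ (by positivity), enorm_one]
    have hpt (x : E) : q n x ≤ ‖v‖ₑ ^ 2 * ∫⁻ r in Icc (0 : ℝ) 1, H (x + (r * c⁻¹) • v) := by
      calc q n x = ‖c‖ₑ ^ 2 * ‖s (x + c⁻¹ • v) - s x‖ₑ ^ 2 := by simp [q, c, mul_pow]
        _ ≤ ‖c‖ₑ ^ 2 * (‖c⁻¹ • v‖ₑ ^ 2 * ∫⁻ r in Icc (0 : ℝ) 1, H (x + r • c⁻¹ • v)) := by
          gcongr; exact hsH x _
        _ = (‖c‖ₑ * ‖c⁻¹‖ₑ) ^ 2 * ‖v‖ₑ ^ 2 * ∫⁻ r in Icc (0 : ℝ) 1, H (x + (r * c⁻¹) • v) := by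
          simp only [enorm_smul, smul_smul]; ring
        _ = _ := by rw [hc, one_pow, one_mul]
    calc ∫⁻ x in A, q n x ∂μ
        ≤ ∫⁻ x in A, ‖v‖ₑ ^ 2 * (∫⁻ r in Icc (0 : ℝ) 1, H (x + (r * c⁻¹) • v)) ∂μ :=
          lintegral_mono hpt
      _ = _ := by
        have hm : Measurable fun p : E × ℝ => H (p.1 + (p.2 * c⁻¹) • v) := by fun_prop
        rw [lintegral_const_mul _ hm.lintegral_prod_right',
          lintegral_lintegral_swap hm.aemeasurable]
  have hτ : Tendsto (fun n : ℕ => ((n : ℝ) + 1)⁻¹) atTop (𝓝 0) := by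
    simpa [one_div] using tendsto_one_div_add_atTop_nhds_zero_nat (𝕜 := ℝ)
  have hlim := ENNReal.Tendsto.const_mul
    (tendsto_lintegral_Icc_setLIntegral_comp_add_smul hH hHfin A v hτ) (a := ‖v‖ₑ ^ 2)
    (Or.inr (by finiteness))
  calc ∫⁻ x in A, ‖fderiv ℝ s x v‖ₑ ^ 2 ∂μ
      ≤ ∫⁻ x in A, liminf (fun n => q n x) atTop ∂μ :=
        lintegral_mono fun x => enorm_fderiv_apply_sq_le_liminf s x v
    _ ≤ liminf (fun n => ∫⁻ x in A, q n x ∂μ) atTop := lintegral_liminf_le hq_meas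
    _ ≤ liminf (fun n : ℕ => ‖v‖ₑ ^ 2 *
          ∫⁻ r in Icc (0 : ℝ) 1, ∫⁻ x in A, H (x + (r * ((n : ℝ) + 1)⁻¹) • v) ∂μ) atTop :=
        liminf_le_liminf (Eventually.of_forall hq_le)
    _ = ‖v‖ₑ ^ 2 * ∫⁻ x in A, H x ∂μ := hlim.liminf_eq

lemma ae_norm_fderiv_sq_le {s : E → ℝ} (hs : Measurable s) (hH : Measurable H)
    (hHfin : ∫⁻ x, H x ∂μ ≠ ∞)
    (hsH : ∀ x v, ‖s (x + v) - s x‖ₑ ^ 2 ≤ ‖v‖ₑ ^ 2 * ∫⁻ t in Icc (0 : ℝ) 1, H (x + t • v)) :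
    ∀ᵐ x ∂μ, ‖fderiv ℝ s x‖ ^ 2 ≤ (H x).toReal := by
  obtain ⟨d, hd⟩ := TopologicalSpace.exists_dense_seq E
  have hdir (v : E) : ∀ᵐ x ∂μ, ‖fderiv ℝ s x v‖ₑ ^ 2 ≤ ‖v‖ₑ ^ 2 * H x := by
    refine ae_le_of_forall_setLIntegral_le_of_sigmaFinite
      ((measurable_fderiv_apply_const ℝ s v).enorm.pow_const 2) fun A _ _ => ?_
    rw [lintegral_const_mul _ hH]
    exact setLIntegral_enorm_fderiv_apply_sq_le hs hH hHfin hsH v A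
  filter_upwards [ae_all_iff.mpr fun n => hdir (d n), ae_lt_top hH hHfin] with x hx hfin
  have hbound : ‖fderiv ℝ s x‖ ≤ √(H x).toReal := by
    refine ContinuousLinearMap.opNorm_le_of_dense (Real.sqrt_nonneg _) hd ?_
    rintro _ ⟨n, rfl⟩
    refine (pow_le_pow_iff_left₀ (norm_nonneg _) (by positivity) two_ne_zero).1 ?_
    rw [mul_pow, Real.sq_sqrt ENNReal.toReal_nonneg, mul_comm]
    simpa [ENNReal.toReal_mul, toReal_enorm] using ENNReal.toReal_mono (by finiteness) (hx n)
  calc ‖fderiv ℝ s x‖ ^ 2 ≤ √(H x).toReal ^ 2 := pow_le_pow_left₀ (norm_nonneg _) hbound 2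
    _ = (H x).toReal := Real.sq_sqrt ENNReal.toReal_nonneg

end DirectionalDerivative

lemma hasFDerivAt_partial_fst {E F G : Type*} [NormedAddCommGroup E] [NormedSpace ℝ E]
    [NormedAddCommGroup F] [NormedSpace ℝ F] [NormedAddCommGroup G] [NormedSpace ℝ G]
    {u : E × F → G} {z : E} {y : F} (hu : DifferentiableAt ℝ u (z, y)) :
    HasFDerivAt (fun x => u (x, y)) ((fderiv ℝ u (z, y)).comp (.inl ℝ E F)) z :=
  hu.hasFDerivAt.comp z (hasFDerivAt_prodMk_left z y)

section Slice

variable {E F G : Type*} [NormedAddCommGroup E] [NormedSpace ℝ E]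
  [NormedAddCommGroup G] [NormedSpace ℝ G]

lemma enorm_sub_sq_le_lintegral_Icc [CompleteSpace G] {f : E → G} {f' : E → E →L[ℝ] G}
    (hf : ∀ z, HasFDerivAt f (f' z) z) (hf' : Continuous f') (x v : E) :
    ‖f (x + v) - f x‖ₑ ^ 2 ≤ ‖v‖ₑ ^ 2 * ∫⁻ t in Icc (0 : ℝ) 1, ‖f' (x + t • v)‖ₑ ^ 2 := by
  have hline (t : ℝ) : HasDerivAt (fun t : ℝ => f (x + t • v)) (f' (x + t • v) v) t := by
    convert (hf (x + t • v)).comp_hasDerivAt t (((hasDerivAt_id t).smul_const v).const_add x)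
      using 1 <;> simp [Function.comp_def]
  have hcont : Continuous fun t : ℝ => f' (x + t • v) := by fun_prop
  have hftc : f (x + v) - f x = ∫ t in Icc (0 : ℝ) 1, f' (x + t • v) v := by
    rw [integral_Icc_eq_integral_Ioc, ← intervalIntegral.integral_of_le zero_le_one,
      intervalIntegral.integral_eq_sub_of_hasDerivAt (fun t _ => hline t)
        ((hcont.clm_apply continuous_const).intervalIntegrable 0 1)]
    simp
  have : IsProbabilityMeasure (volume.restrict (Icc (0 : ℝ) 1)) := ⟨by simp⟩
  calc ‖f (x + v) - f x‖ₑ ^ 2 ≤ (∫⁻ t in Icc (0 : ℝ) 1, ‖f' (x + t • v)‖ₑ * ‖v‖ₑ) ^ 2 := by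
        rw [hftc]
        gcongr
        exact (enorm_integral_le_lintegral_enorm _).trans
          (lintegral_mono fun t => (f' _).le_opENorm v)
    _ = ‖v‖ₑ ^ 2 * (∫⁻ t in Icc (0 : ℝ) 1, ‖f' (x + t • v)‖ₑ) ^ 2 := by
        rw [lintegral_mul_const _ hcont.enorm.measurable]; ring
    _ ≤ _ := by gcongr; exact sq_lintegral_le_lintegral_sq _ hcont.enorm.measurable.aemeasurable

variable [TopologicalSpace F] [MeasurableSpace F] [BorelSpace F]
  {ν : Measure F} [SFinite ν]

lemma enorm_sub_sq_eLpNorm_slice_le [CompleteSpace G] {u : E × F → G} {D : E × F → E →L[ℝ] G}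
    (hu : ∀ z y, HasFDerivAt (fun x => u (x, y)) (D (z, y)) z) (hD : Continuous D)
    (hmeas : ∀ x, AEStronglyMeasurable (fun y => u (x, y)) ν) (x v : E) :
    ‖(eLpNorm (fun y => u (x + v, y)) 2 ν).toReal - (eLpNorm (fun y => u (x, y)) 2 ν).toReal‖ₑ ^ 2
      ≤ ‖v‖ₑ ^ 2 * ∫⁻ t in Icc (0 : ℝ) 1, ∫⁻ y, ‖D (x + t • v, y)‖ₑ ^ 2 ∂ν := by
  set δ : F → G := fun y => u (x + v, y) - u (x, y)
  have hmδ : AEStronglyMeasurable δ ν := (hmeas _).sub (hmeas _)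
  have hrev : ‖(eLpNorm (fun y => u (x + v, y)) 2 ν).toReal -
      (eLpNorm (fun y => u (x, y)) 2 ν).toReal‖ₑ ≤ eLpNorm δ 2 ν := by
    refine enorm_toReal_sub_toReal_le ?_ ?_
    · calc eLpNorm (fun y => u (x + v, y)) 2 ν = eLpNorm ((fun y => u (x, y)) + δ) 2 ν := by
            congr 1; ext; simp [δ]
        _ ≤ _ := eLpNorm_add_le (hmeas x) hmδ one_le_two
    · calc eLpNorm (fun y => u (x, y)) 2 ν = eLpNorm ((fun y => u (x + v, y)) - δ) 2 ν := by
            congr 1; ext; simp [δ]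
        _ ≤ _ := eLpNorm_sub_le (hmeas _) hmδ one_le_two
  have hm : Measurable fun p : F × ℝ => ‖D (x + p.2 • v, p.1)‖ₑ ^ 2 :=
    ((hD.comp (by fun_prop)).enorm.measurable).pow_const 2
  calc _ ≤ eLpNorm δ 2 ν ^ 2 := by gcongr
    _ = ∫⁻ y, ‖δ y‖ₑ ^ 2 ∂ν := eLpNorm_two_sq ν δ
    _ ≤ ∫⁻ y, ‖v‖ₑ ^ 2 * (∫⁻ t in Icc (0 : ℝ) 1, ‖D (x + t • v, y)‖ₑ ^ 2) ∂ν :=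
        lintegral_mono fun y => enorm_sub_sq_le_lintegral_Icc (hu · y) (by fun_prop) x v
    _ = _ := by
        rw [lintegral_const_mul _ hm.lintegral_prod_right',
          lintegral_lintegral_swap hm.aemeasurable]

end Slice

lemma measurable_eLpNorm_slice {E F G : Type*} [TopologicalSpace E] [MeasurableSpace E]
    [OpensMeasurableSpace E] [TopologicalSpace F] [MeasurableSpace F] [OpensMeasurableSpace F]
    [SecondCountableTopologyEither E F] [NormedAddCommGroup G] {ν : Measure F} [SFinite ν]
    {u : E × F → G} (hu : Continuous u) :
    Measurable fun x => eLpNorm (fun y => u (x, y)) 2 ν := by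
  simp_rw [eLpNorm_eq_lintegral_rpow_enorm_toReal two_ne_zero ofNat_ne_top]
  exact (hu.enorm.measurable.pow_const _).lintegral_prod_right'.pow_const _

section HoffmannOstenhof

variable {E F G : Type*} [NormedAddCommGroup E] [NormedSpace ℝ E] [FiniteDimensional ℝ E]
  [MeasurableSpace E] [BorelSpace E] {μ : Measure E} [μ.IsAddHaarMeasure]
  [NormedAddCommGroup F] [NormedSpace ℝ F] [SecondCountableTopology F] [MeasurableSpace F]
  [BorelSpace F] {ν : Measure F} [SFinite ν]
  [NormedAddCommGroup G] [NormedSpace ℝ G] [CompleteSpace G]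

theorem ae_norm_fderiv_eLpNorm_slice_sq_le {u : E × F → G} (hu : ContDiff ℝ 1 u)
    (hgrad : Integrable (fun p : E × F => ‖fderiv ℝ (fun x => u (x, p.2)) p.1‖ ^ 2) (μ.prod ν)) :
    ∀ᵐ x ∂μ, ‖fderiv ℝ (fun x => (eLpNorm (fun y => u (x, y)) 2 ν).toReal) x‖ ^ 2 ≤
      ∫ y, ‖fderiv ℝ (fun x' => u (x', y)) x‖ ^ 2 ∂ν := by
  set D : E × F → E →L[ℝ] G := fun p => fderiv ℝ (fun x => u (x, p.2)) p.1
  have hu_diff : Differentiable ℝ u := hu.differentiable one_ne_zero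
  have hD_eq (p : E × F) : D p = (fderiv ℝ u p).comp (.inl ℝ E F) :=
    (hasFDerivAt_partial_fst (hu_diff p)).fderiv
  have hD : Continuous D := by
    rw [funext hD_eq]; exact (hu.continuous_fderiv one_ne_zero).clm_comp continuous_const
  have hpartial (z : E) (y : F) : HasFDerivAt (fun x => u (x, y)) (D (z, y)) z :=
    hD_eq (z, y) ▸ hasFDerivAt_partial_fst (hu_diff (z, y))
  have hDm : Measurable fun p : E × F => ‖D p‖ₑ ^ 2 := hD.enorm.measurable.pow_const 2
  have hHfin : ∫⁻ x, ∫⁻ y, ‖D (x, y)‖ₑ ^ 2 ∂ν ∂μ ≠ ∞ := by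
    rw [← lintegral_prod _ hDm.aemeasurable]
    simpa only [← ofReal_norm, ← ENNReal.ofReal_pow (norm_nonneg _)]
      using (hasFiniteIntegral_iff_ofReal (ae_of_all _ fun _ => by positivity)).1
        hgrad.hasFiniteIntegral |>.ne
  filter_upwards [ae_norm_fderiv_sq_le
      (measurable_eLpNorm_slice hu.continuous).ennreal_toReal
      hDm.lintegral_prod_right' hHfin (enorm_sub_sq_eLpNorm_slice_le hpartial hD
        fun x => (hu.continuous.comp (.prodMk_right x)).aestronglyMeasurable)] with x hx
  exact hx.trans_eq (integral_norm_sq_eq_toReal_lintegral (f := fun y => D (x, y))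
    (hD.comp (.prodMk_right x)).aestronglyMeasurable).symm

end HoffmannOstenhof

/-- Hoffmann-Ostenhof inequality: if `u ∈ H¹(ℝⁿ)` (here `ℝⁿ = ℝᵏ × ℝᵐ`) and
`μ_k(x) = ∫_{ℝᵐ} |u(x,y)|² dy`, then `√μ_k ∈ H¹(ℝᵏ)` and
`∫ |∇√μ_k|² ≤ ∫∫ |∇_x u(x,y)|² dx dy`. -/
theorem hoffmann_ostenhof (k m : ℕ)
    (u : EuclideanSpace ℝ (Fin k) × EuclideanSpace ℝ (Fin m) → ℂ)
    (hu : ContDiff ℝ 1 u)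
    (huL2 : MemLp u 2 volume)
    (hgrad : Integrable
      (fun p : EuclideanSpace ℝ (Fin k) × EuclideanSpace ℝ (Fin m) =>
        ‖fderiv ℝ (fun x => u (x, p.2)) p.1‖ ^ 2))
    (μk : EuclideanSpace ℝ (Fin k) → ℝ)
    (hμk : ∀ x, μk x = ∫ y, ‖u (x, y)‖ ^ 2) :
    MemLp (fun x => Real.sqrt (μk x)) 2 volume ∧
      Integrable (fun x => ‖fderiv ℝ (fun x' => Real.sqrt (μk x')) x‖ ^ 2) ∧
      ∫ x, ‖fderiv ℝ (fun x' => Real.sqrt (μk x')) x‖ ^ 2 ≤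
        ∫ p : EuclideanSpace ℝ (Fin k) × EuclideanSpace ℝ (Fin m),
          ‖fderiv ℝ (fun x => u (x, p.2)) p.1‖ ^ 2 := by
  rw [Measure.volume_eq_prod] at huL2 hgrad ⊢
  have hμk_int : Integrable μk := by
    simpa only [← hμk] using
      ((memLp_two_iff_integrable_sq_norm huL2.1).1 huL2).integral_prod_left
  have hsqrt (x : EuclideanSpace ℝ (Fin k)) :
      √(μk x) = (eLpNorm (fun y => u (x, y)) 2 volume).toReal := by
    rw [hμk, integral_norm_sq_eq_toReal_lintegral (f := fun y => u (x, y))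
      (hu.continuous.comp (.prodMk_right x)).aestronglyMeasurable, ← eLpNorm_two_sq,
      ENNReal.toReal_pow, Real.sqrt_sq ENNReal.toReal_nonneg]
  have hbound := ae_norm_fderiv_eLpNorm_slice_sq_le (μ := volume) hu hgrad
  simp_rw [← funext hsqrt] at hbound
  borelize (EuclideanSpace ℝ (Fin k) →L[ℝ] ℝ)
  have hint : Integrable fun x => ‖fderiv ℝ (fun x' => √(μk x')) x‖ ^ 2 :=
    hgrad.integral_prod_left.mono'
      ((measurable_fderiv ℝ _).norm.pow_const 2).aestronglyMeasurable
      (hbound.mono fun x hx => by simpa using hx)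
  refine ⟨?_, hint, ?_⟩
  · refine (memLp_two_iff_integrable_sq
      (Real.continuous_sqrt.comp_aestronglyMeasurable hμk_int.1)).2 (hμk_int.congr ?_)
    exact ae_of_all _ fun x => (Real.sq_sqrt (by rw [hμk]; positivity)).symm
  · rw [integral_prod _ hgrad]
    exact integral_mono_ae hint hgrad.integral_prod_left hbound
end

section
/- Let γ_A be a probability density on ℝ^{Nd} whose N one-body marginals all equal a probability density μ_A on ℝ^d (with μ_A > 0 a.e.), and let μ_B be a probability density on ℝ^d. Define γ_{B,A} as in the smoothing construction and Pγ_A(x_1,…,x_N) = ∫…∫ ∏_{i=1}^N (γ_{B,A}(x_i,x_i')/μ_A(x_i')) γ_A(x_1',…,x_N') dx_1'…dx_N'. Then Pγ_A is a probability density on ℝ^{Nd} and each of its N one-body marginals equals μ_B. -/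
open MeasureTheory

/-- The kernel `x' ↦ γ_{B,A}(·, x')/μ_A(x')`, where
`γ_{B,A}(x,x') = f(x)δ_x(x') + f_B(x) f_A(x')/∫f_B` with `f = min(μ_A,μ_B)`,
`f_A = (μ_A − f)₊`, `f_B = (μ_B − f)₊`. -/
noncomputable def coupleKernel (d : ℕ) (μA μB : (Fin d → ℝ) → ℝ) (x' : Fin d → ℝ) :
    Measure (Fin d → ℝ) :=
  ENNReal.ofReal (min (μA x') (μB x') / μA x') • Measure.dirac x' +
    volume.withDensity (fun x => ENNReal.ofReal
      (max (μA x' - min (μA x') (μB x')) 0 /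
          (μA x' * ∫ y, max (μB y - min (μA y) (μB y)) 0) *
        max (μB x - min (μA x) (μB x)) 0))

/-- The operator `P`: `Pγ_A(x_1,…,x_N) = ∫ ∏ᵢ (γ_{B,A}(x_i,x_i')/μ_A(x_i')) γ_A(x') dx'`. -/
noncomputable def smoothP (N d : ℕ) (μA μB : (Fin d → ℝ) → ℝ)
    (ν : Measure (Fin N → Fin d → ℝ)) : Measure (Fin N → Fin d → ℝ) :=
  ν.bind (fun x' => Measure.pi (fun i => coupleKernel d μA μB (x' i)))

/-!
For `μA`-a.e. `y` the kernel
`κ_y = coupleKernel y = (min(μA,μB)/μA)(y) • δ_y + (f_A(y)/(μA(y) ∫ f_B)) • f_B dx`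
is a probability measure: its two masses add up to `(min(μA,μB) + f_A)/μA = 1`, because
`∫ f_A = ∫ f_B` (both are `1 - ∫ min(μA,μB)`). Integrated against `μA` it gives
`min(μA,μB) + f_B = μB`. The operator `P` moves every coordinate independently with this kernel,
so the `i`-th marginal of `Pγ_A` is the `i`-th marginal `μA` of `γ_A` moved by the kernel,
i.e. `μB`.

For the density, `κ_y ≪ δ_y + f_B dx`. Against a product `m^⊗N` of probability measures
equivalent to Lebesgue measure, the product kernels `∏ᵢ (δ_{xᵢ} + f_B dx)` integrate to
`(m + f_B dx)^⊗N`, which is absolutely continuous; since `γ_A ≪ m^⊗N`, so is `Pγ_A`.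
-/

open ENNReal Set ProbabilityTheory

namespace MeasureTheory.Measure

variable {α β : Type*} [MeasurableSpace α] [MeasurableSpace β] {n : ℕ}

theorem AbsolutelyContinuous.pi {μ ν : Fin n → Measure α} [∀ i, SigmaFinite (μ i)]
    [∀ i, SigmaFinite (ν i)] (h : ∀ i, μ i ≪ ν i) : Measure.pi μ ≪ Measure.pi ν := by
  induction n with
  | zero => rw [pi_of_empty μ, pi_of_empty ν]
  | succ n ih =>
    rw [← (measurePreserving_piFinSuccAbove μ 0).symm.map_eq,
      ← (measurePreserving_piFinSuccAbove ν 0).symm.map_eq]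
    exact ((h 0).prod (ih fun j => h _)).map (MeasurableEquiv.measurable _)

theorem measurable_pi_comp {κ : Fin n → α → Measure β} (hκ : ∀ i, Measurable (κ i))
    [∀ i a, IsFiniteMeasure (κ i a)] :
    Measurable fun x : Fin n → α => Measure.pi fun i => κ i (x i) := by
  have hbox : ∀ t : Fin n → Set β, (∀ i, MeasurableSet (t i)) →
      Measurable fun x : Fin n → α => Measure.pi (fun i => κ i (x i)) (univ.pi t) := by
    intro t ht
    simp_rw [pi_pi]
    exact Finset.measurable_prod _ fun i _ =>
      (measurable_coe (ht i)).comp ((hκ i).comp (measurable_pi_apply i))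
  refine .measure_of_isPiSystem generateFrom_pi.symm isPiSystem_pi ?_
    (by simpa using hbox (fun _ => univ) fun _ => .univ)
  rintro _ ⟨t, ht, rfl⟩
  exact hbox t fun i => ht i (mem_univ i)

theorem bind_pi (m : Fin n → Measure α) [∀ i, IsProbabilityMeasure (m i)]
    {κ : Fin n → α → Measure β} (hκ : ∀ i, Measurable (κ i)) [∀ i a, IsFiniteMeasure (κ i a)]
    [∀ i, SigmaFinite ((m i).bind (κ i))] :
    (Measure.pi m).bind (fun x => Measure.pi fun i => κ i (x i)) =
      Measure.pi fun i => (m i).bind (κ i) := by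
  refine (pi_eq fun s hs => ?_).symm
  have hκs : ∀ i, Measurable fun a => κ i a (s i) := fun i => (measurable_coe (hs i)).comp (hκ i)
  rw [bind_apply (.univ_pi hs) (measurable_pi_comp hκ).aemeasurable]
  simp_rw [pi_pi]
  refine (lintegral_prod_eq_prod_lintegral_of_indepFun _
    (fun i (x : Fin n → α) => κ i (x i) (s i)) (iIndepFun_pi fun i => (hκs i).aemeasurable)
    fun i => (hκs i).comp (measurable_pi_apply i)).trans (Finset.prod_congr rfl fun i _ => ?_)
  rw [bind_apply (hs i) (hκ i).aemeasurable,
    ← (measurePreserving_eval m i).lintegral_comp (hκs i)]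

theorem bind_absolutelyContinuous_bind {ν ν' : Measure α} {κ η : α → Measure β}
    (hκ : Measurable κ) (hη : Measurable η) (hν : ν ≪ ν') (h : ∀ᵐ x ∂ν, κ x ≪ η x) :
    ν.bind κ ≪ ν'.bind η := by
  refine AbsolutelyContinuous.mk fun s hs hs0 => ?_
  have hηs : Measurable fun x => η x s := (measurable_coe hs).comp hη
  have hκs : Measurable fun x => κ x s := (measurable_coe hs).comp hκ
  rw [bind_apply hs hη.aemeasurable, lintegral_eq_zero_iff hηs] at hs0
  rw [bind_apply hs hκ.aemeasurable, lintegral_eq_zero_iff hκs]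
  filter_upwards [h, hν.ae_le hs0] with x hx hx0
  exact hx hx0

theorem map_eval_bind_pi (ν : Measure (Fin n → α)) {κ : α → Measure β} (hκ : Measurable κ)
    [∀ a, IsFiniteMeasure (κ a)] (h1 : ∀ᵐ x ∂ν, ∀ j, κ (x j) univ = 1) (i : Fin n) :
    (ν.bind fun x => Measure.pi fun j => κ (x j)).map (Function.eval i) =
      (ν.map (Function.eval i)).bind κ := by
  classical
  ext s hs
  have hκs : Measurable fun a => κ a s := (measurable_coe hs).comp hκ
  rw [map_apply (measurable_pi_apply i) hs, bind_apply (hs.preimage (measurable_pi_apply i))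
      (measurable_pi_comp fun _ => hκ).aemeasurable,
    bind_apply hs hκ.aemeasurable, lintegral_map hκs (measurable_pi_apply i)]
  refine lintegral_congr_ae (h1.mono fun x hx => ?_)
  change Measure.pi (fun j => κ (x j)) (Function.eval i ⁻¹' s) = κ (x i) s
  rw [← map_apply (measurable_pi_apply i) hs, pi_map_eval, Finset.prod_eq_one fun j _ => hx j,
    one_smul]

theorem bind_dirac_add (m ξ : Measure α) [IsProbabilityMeasure m] :
    m.bind (fun a => dirac a + ξ) = m + ξ := by
  ext s hs
  rw [bind_apply hs (by fun_prop)]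
  simp [dirac_apply' _ hs, lintegral_add_right _ measurable_const, lintegral_indicator_one hs]

theorem bind_pi_absolutelyContinuous {μ ξ : Measure α} [SigmaFinite μ] [NeZero μ]
    [IsFiniteMeasure ξ] (hξ : ξ ≪ μ) {ν : Measure (Fin n → α)} (hν : ν ≪ Measure.pi fun _ => μ)
    {κ : α → Measure α} (hκ : Measurable κ) [∀ a, IsFiniteMeasure (κ a)]
    (hκξ : ∀ a, κ a ≪ dirac a + ξ) :
    ν.bind (fun x => Measure.pi fun i => κ (x i)) ≪ Measure.pi fun _ => μ := by
  have hbind := bind_dirac_add μ.toFinite ξ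
  have : SigmaFinite (μ.toFinite.bind fun a => dirac a + ξ) := by
    rw [hbind]; infer_instance
  have hpi : (Measure.pi fun _ => μ.toFinite).bind
      (fun x => Measure.pi fun i : Fin n => dirac (x i) + ξ) =
        Measure.pi fun _ => μ.toFinite + ξ := by
    rw [bind_pi (κ := fun _ a => dirac a + ξ) _ fun _ => by fun_prop, hbind]
  refine (bind_absolutelyContinuous_bind (measurable_pi_comp fun _ => hκ)
    (measurable_pi_comp (κ := fun _ a => dirac a + ξ) fun _ => by fun_prop)
    (hν.trans (AbsolutelyContinuous.pi fun _ => absolutelyContinuous_toFinite μ))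
    (ae_of_all _ fun x => AbsolutelyContinuous.pi fun i => hκξ (x i))).trans ?_
  rw [hpi]
  exact AbsolutelyContinuous.pi fun _ => (toFinite_absolutelyContinuous μ).add_left hξ

theorem exists_density_of_absolutelyContinuous {μ ν : Measure α} [SigmaFinite μ]
    [SigmaFinite ν] (h : μ ≪ ν) : ∃ ρ : α → ℝ, Measurable ρ ∧ (∀ x, 0 ≤ ρ x) ∧
      μ = ν.withDensity fun x => ENNReal.ofReal (ρ x) := by
  refine ⟨fun x => (μ.rnDeriv ν x).toReal, (measurable_rnDeriv μ ν).ennreal_toReal,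
    fun _ => toReal_nonneg, ?_⟩
  have h1 : (fun x => ENNReal.ofReal (μ.rnDeriv ν x).toReal) =ᵐ[ν] μ.rnDeriv ν :=
    (rnDeriv_lt_top μ ν).mono fun x hx => ofReal_toReal hx.ne
  rw [withDensity_congr_ae h1, withDensity_rnDeriv_eq _ _ h]

end MeasureTheory.Measure

section Density

variable {α : Type*} [MeasurableSpace α] {μ : Measure α} {f : α → ℝ}

theorem isProbabilityMeasure_withDensity_ofReal (hf0 : 0 ≤ᵐ[μ] f) (hf1 : ∫ x, f x ∂μ = 1) :
    IsProbabilityMeasure (μ.withDensity fun x => ENNReal.ofReal (f x)) := by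
  have hfi : Integrable f μ := .of_integral_ne_zero (by rw [hf1]; exact one_ne_zero)
  constructor
  rw [withDensity_apply _ .univ, Measure.restrict_univ,
    ← ofReal_integral_eq_lintegral_ofReal hfi hf0, hf1, ofReal_one]

theorem integrable_and_integral_eq_one_of_isProbabilityMeasure_withDensity
    (hfm : AEStronglyMeasurable f μ) (hf0 : 0 ≤ᵐ[μ] f)
    [h : IsProbabilityMeasure (μ.withDensity fun x => ENNReal.ofReal (f x))] :
    Integrable f μ ∧ ∫ x, f x ∂μ = 1 := by
  have hlin : ∫⁻ x, ENNReal.ofReal (f x) ∂μ = 1 := by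
    simpa [withDensity_apply _ MeasurableSet.univ] using h.measure_univ
  refine ⟨⟨hfm, ?_⟩, ?_⟩
  · rw [hasFiniteIntegral_iff_ofReal hf0, hlin]
    exact one_lt_top
  · rw [integral_eq_lintegral_of_nonneg_ae hf0 hfm, hlin, toReal_one]

end Density

section CoupleKernel

variable {d : ℕ} {μA μB : (Fin d → ℝ) → ℝ}

noncomputable def fA (μA μB : (Fin d → ℝ) → ℝ) (x : Fin d → ℝ) : ℝ :=
  max (μA x - min (μA x) (μB x)) 0

noncomputable def fB (μA μB : (Fin d → ℝ) → ℝ) (x : Fin d → ℝ) : ℝ :=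
  max (μB x - min (μA x) (μB x)) 0

noncomputable def fBMeasure (μA μB : (Fin d → ℝ) → ℝ) : Measure (Fin d → ℝ) :=
  volume.withDensity fun x => ENNReal.ofReal (fB μA μB x)

theorem fA_nonneg (x : Fin d → ℝ) : 0 ≤ fA μA μB x := le_max_right _ _

theorem fB_nonneg (x : Fin d → ℝ) : 0 ≤ fB μA μB x := le_max_right _ _

theorem fA_eq (x : Fin d → ℝ) : fA μA μB x = μA x - min (μA x) (μB x) :=
  max_eq_left (sub_nonneg.2 (min_le_left _ _))

theorem fB_eq (x : Fin d → ℝ) : fB μA μB x = μB x - min (μA x) (μB x) :=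
  max_eq_left (sub_nonneg.2 (min_le_right _ _))

theorem measurable_fA (hμAm : Measurable μA) (hμBm : Measurable μB) :
    Measurable (fA μA μB) := by
  unfold fA; fun_prop

theorem integrable_min (hμAi : Integrable μA) (hμBi : Integrable μB) :
    Integrable fun x => min (μA x) (μB x) :=
  hμAi.inf hμBi

theorem integrable_fA (hμAi : Integrable μA) (hμBi : Integrable μB) :
    Integrable (fA μA μB) := by
  rw [show fA μA μB = fun x => μA x - min (μA x) (μB x) from funext fA_eq]
  exact hμAi.sub (integrable_min hμAi hμBi)

theorem integrable_fB (hμAi : Integrable μA) (hμBi : Integrable μB) :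
    Integrable (fB μA μB) := by
  rw [show fB μA μB = fun x => μB x - min (μA x) (μB x) from funext fB_eq]
  exact hμBi.sub (integrable_min hμAi hμBi)

theorem integral_fA_eq_integral_fB (hμAi : Integrable μA) (hμBi : Integrable μB)
    (hint : ∫ x, μA x = ∫ x, μB x) : ∫ x, fA μA μB x = ∫ x, fB μA μB x := by
  simp_rw [fA_eq, fB_eq]
  rw [integral_sub hμAi (integrable_min hμAi hμBi), integral_sub hμBi (integrable_min hμAi hμBi),
    hint]

theorem fBMeasure_univ (hi : Integrable (fB μA μB)) :
    fBMeasure μA μB univ = ENNReal.ofReal (∫ x, fB μA μB x) := by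
  rw [fBMeasure, withDensity_apply _ .univ, Measure.restrict_univ,
    ofReal_integral_eq_lintegral_ofReal hi (ae_of_all _ fB_nonneg)]

theorem isFiniteMeasure_fBMeasure (hi : Integrable (fB μA μB)) :
    IsFiniteMeasure (fBMeasure μA μB) :=
  ⟨by rw [fBMeasure_univ hi]; exact ofReal_lt_top⟩

theorem coupleKernel_eq (y : Fin d → ℝ) :
    coupleKernel d μA μB y =
      ENNReal.ofReal (min (μA y) (μB y) / μA y) • Measure.dirac y +
        ENNReal.ofReal (fA μA μB y / (μA y * ∫ x, fB μA μB x)) • fBMeasure μA μB := by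
  rw [coupleKernel, fBMeasure, ← withDensity_smul' _ _ ofReal_ne_top]
  congr 2
  funext x
  rw [Pi.smul_apply, smul_eq_mul, ← ENNReal.ofReal_mul' (fB_nonneg x)]
  rfl

theorem coupleKernel_apply (y : Fin d → ℝ) {s : Set (Fin d → ℝ)} (hs : MeasurableSet s) :
    coupleKernel d μA μB y s =
      ENNReal.ofReal (min (μA y) (μB y) / μA y) * s.indicator 1 y +
        ENNReal.ofReal (fA μA μB y / (μA y * ∫ x, fB μA μB x)) * fBMeasure μA μB s := by
  rw [coupleKernel_eq, Measure.add_apply, Measure.smul_apply, Measure.smul_apply, smul_eq_mul,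
    smul_eq_mul, Measure.dirac_apply' _ hs]

theorem measurable_coupleKernel (hμAm : Measurable μA) (hμBm : Measurable μB) :
    Measurable (coupleKernel d μA μB) := by
  have := measurable_fA hμAm hμBm
  refine Measure.measurable_of_measurable_coe _ fun s hs => ?_
  simp_rw [coupleKernel_apply _ hs]
  fun_prop (disch := exact hs)

theorem isFiniteMeasure_coupleKernel (hi : Integrable (fB μA μB)) (y : Fin d → ℝ) :
    IsFiniteMeasure (coupleKernel d μA μB y) := by
  have := isFiniteMeasure_fBMeasure hi
  constructor
  rw [coupleKernel_apply y .univ]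
  exact add_lt_top.2
    ⟨mul_lt_top ofReal_lt_top (by simp), mul_lt_top ofReal_lt_top (measure_lt_top _ _)⟩

theorem coupleKernel_absolutelyContinuous (y : Fin d → ℝ) :
    coupleKernel d μA μB y ≪ Measure.dirac y + fBMeasure μA μB := by
  rw [coupleKernel_eq]
  exact Measure.smul_absolutelyContinuous.add Measure.smul_absolutelyContinuous

/-- If `∫ f_B = 0` the left side is junk (`x / 0 = 0`), but then `f_A = 0` a.e. as well. -/
theorem fA_div_mul_integral_fB_ae (hμAi : Integrable μA) (hμBi : Integrable μB)
    (hint : ∫ x, μA x = ∫ x, μB x) :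
    ∀ᵐ y, fA μA μB y / (μA y * ∫ x, fB μA μB x) * ∫ x, fB μA μB x = fA μA μB y / μA y := by
  rcases eq_or_ne (∫ x, fB μA μB x) 0 with hc | hc
  · have hfA : fA μA μB =ᵐ[volume] 0 :=
      (integral_eq_zero_iff_of_nonneg fA_nonneg (integrable_fA hμAi hμBi)).1
        (by rw [integral_fA_eq_integral_fB hμAi hμBi hint, hc])
    filter_upwards [hfA] with y hy
    simp [hy, hc]
  · exact ae_of_all _ fun y => by rw [div_mul_eq_mul_div, mul_div_mul_right _ _ hc]

theorem coupleKernel_apply_univ_ae (hμAi : Integrable μA) (hμBi : Integrable μB)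
    (hμA0 : ∀ᵐ x, 0 < μA x) (hμB0 : ∀ᵐ x, 0 ≤ μB x) (hint : ∫ x, μA x = ∫ x, μB x) :
    ∀ᵐ y, coupleKernel d μA μB y univ = 1 := by
  filter_upwards [hμA0, hμB0, fA_div_mul_integral_fB_ae hμAi hμBi hint] with y hyA hyB hy
  rw [coupleKernel_apply y .univ, indicator_of_mem (mem_univ y), Pi.one_apply, mul_one,
    fBMeasure_univ (integrable_fB hμAi hμBi), ← ofReal_mul' (integral_nonneg fB_nonneg), hy,
    ← ofReal_add (div_nonneg (le_min hyA.le hyB) hyA.le) (div_nonneg (fA_nonneg y) hyA.le),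
    ← add_div, fA_eq, add_sub_cancel, div_self hyA.ne', ofReal_one]

theorem ofReal_mul_coupleKernel_apply {y : Fin d → ℝ} (hy : 0 < μA y) {s : Set (Fin d → ℝ)}
    (hs : MeasurableSet s) :
    ENNReal.ofReal (μA y) * coupleKernel d μA μB y s =
      s.indicator (fun t => ENNReal.ofReal (min (μA t) (μB t))) y +
        ENNReal.ofReal (fA μA μB y / ∫ x, fB μA μB x) * fBMeasure μA μB s := by
  rw [coupleKernel_apply y hs, mul_add, ← mul_assoc, ← mul_assoc, ← ofReal_mul hy.le,
    ← ofReal_mul hy.le, mul_div_cancel₀ _ hy.ne', ← div_div, ← mul_div_assoc,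
    mul_div_cancel₀ _ hy.ne']
  by_cases hys : y ∈ s <;> simp [hys]

theorem lintegral_fA_div_mul_fBMeasure (hμAi : Integrable μA) (hμBi : Integrable μB)
    (hint : ∫ x, μA x = ∫ x, μB x) (s : Set (Fin d → ℝ)) :
    (∫⁻ y, ENNReal.ofReal (fA μA μB y / ∫ x, fB μA μB x)) * fBMeasure μA μB s =
      fBMeasure μA μB s := by
  rcases eq_or_ne (∫ x, fB μA μB x) 0 with hc | hc
  · rw [measure_mono_null (subset_univ s)
      (by rw [fBMeasure_univ (integrable_fB hμAi hμBi), hc, ofReal_zero]), mul_zero]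
  · rw [← ofReal_integral_eq_lintegral_ofReal ((integrable_fA hμAi hμBi).div_const _)
      (ae_of_all _ fun y => div_nonneg (fA_nonneg y) (integral_nonneg fB_nonneg)), integral_div,
      integral_fA_eq_integral_fB hμAi hμBi hint, div_self hc, ofReal_one, one_mul]

theorem bind_coupleKernel (hμAm : Measurable μA) (hμBm : Measurable μB) (hμAi : Integrable μA)
    (hμBi : Integrable μB) (hμA0 : ∀ᵐ x, 0 < μA x) (hμB0 : ∀ᵐ x, 0 ≤ μB x)
    (hint : ∫ x, μA x = ∫ x, μB x) :
    (volume.withDensity fun x => ENNReal.ofReal (μA x)).bind (coupleKernel d μA μB) =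
      volume.withDensity fun x => ENNReal.ofReal (μB x) := by
  have hκ := measurable_coupleKernel hμAm hμBm
  have hmin : Measurable fun t => ENNReal.ofReal (min (μA t) (μB t)) := by fun_prop
  ext s hs
  have hκs : Measurable fun y => coupleKernel d μA μB y s := (Measure.measurable_coe hs).comp hκ
  rw [Measure.bind_apply hs hκ.aemeasurable,
    lintegral_withDensity_eq_lintegral_mul _ hμAm.ennreal_ofReal hκs, withDensity_apply _ hs]
  calc _ = ∫⁻ y, s.indicator (fun t => ENNReal.ofReal (min (μA t) (μB t))) y +
          ENNReal.ofReal (fA μA μB y / ∫ x, fB μA μB x) * fBMeasure μA μB s :=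
        lintegral_congr_ae (hμA0.mono fun y hy => ofReal_mul_coupleKernel_apply hy hs)
    _ = (∫⁻ y in s, ENNReal.ofReal (min (μA y) (μB y))) + fBMeasure μA μB s := by
      rw [lintegral_add_left (hmin.indicator hs), lintegral_indicator hs,
        lintegral_mul_const _ (by have := measurable_fA hμAm hμBm; fun_prop),
        lintegral_fA_div_mul_fBMeasure hμAi hμBi hint]
    _ = ∫⁻ y in s, ENNReal.ofReal (μB y) := by
      rw [fBMeasure, withDensity_apply _ hs, ← lintegral_add_left hmin]
      refine lintegral_congr_ae (ae_restrict_of_ae ?_)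
      filter_upwards [hμA0, hμB0] with y hyA hyB
      rw [← ofReal_add (le_min hyA.le hyB) (fB_nonneg y), fB_eq, add_sub_cancel]

end CoupleKernel

theorem map_eval_smoothP {N d : ℕ} {μA μB : (Fin d → ℝ) → ℝ} {ν : Measure (Fin N → Fin d → ℝ)}
    (hμAm : Measurable μA) (hμBm : Measurable μB) (hμAi : Integrable μA) (hμBi : Integrable μB)
    (hμA0 : ∀ᵐ x, 0 < μA x) (hμB0 : ∀ᵐ x, 0 ≤ μB x) (hint : ∫ x, μA x = ∫ x, μB x)
    (hmarg : ∀ i, ν.map (fun x => x i) = volume.withDensity fun t => ENNReal.ofReal (μA t))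
    (i : Fin N) :
    (smoothP N d μA μB ν).map (fun x => x i) =
      volume.withDensity fun t => ENNReal.ofReal (μB t) := by
  have := isFiniteMeasure_coupleKernel (integrable_fB hμAi hμBi)
  have hmass : ∀ᵐ x ∂ν, ∀ j, coupleKernel d μA μB (x j) univ = 1 := by
    refine ae_all_iff.2 fun j => ?_
    have h : ∀ᵐ y ∂(ν.map fun x => x j), coupleKernel d μA μB y univ = 1 := by
      rw [hmarg j]
      exact (withDensity_absolutelyContinuous _ _).ae_le
        (coupleKernel_apply_univ_ae hμAi hμBi hμA0 hμB0 hint)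
    exact ae_of_ae_map (measurable_pi_apply j).aemeasurable h
  rw [smoothP, Measure.map_eval_bind_pi ν (measurable_coupleKernel hμAm hμBm) hmass i, hmarg i,
    bind_coupleKernel hμAm hμBm hμAi hμBi hμA0 hμB0 hint]

theorem smoothP_absolutelyContinuous {N d : ℕ} {μA μB : (Fin d → ℝ) → ℝ}
    {ν : Measure (Fin N → Fin d → ℝ)} (hν : ν ≪ volume) (hμAm : Measurable μA)
    (hμBm : Measurable μB) (hi : Integrable (fB μA μB)) :
    smoothP N d μA μB ν ≪ volume := by
  have := isFiniteMeasure_coupleKernel hi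
  have := isFiniteMeasure_fBMeasure hi
  exact Measure.bind_pi_absolutelyContinuous (ξ := fBMeasure μA μB)
    (withDensity_absolutelyContinuous _ _) hν (measurable_coupleKernel hμAm hμBm)
    coupleKernel_absolutelyContinuous

theorem smoothP_marginals_general (N d : ℕ) (hN : 1 ≤ N)
    (γA : (Fin N → Fin d → ℝ) → ℝ) (μA μB : (Fin d → ℝ) → ℝ)
    (hγA0 : ∀ x, 0 ≤ γA x) (hγA1 : ∫ x, γA x = 1)
    (hμAm : Measurable μA) (hμA0 : ∀ᵐ x, 0 < μA x)
    (hμBm : Measurable μB) (hμB0 : ∀ x, 0 ≤ μB x) (hμB1 : ∫ x, μB x = 1)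
    (hmarg : ∀ i : Fin N,
      (volume.withDensity (fun x => ENNReal.ofReal (γA x))).map (fun x => x i) =
        volume.withDensity (fun t => ENNReal.ofReal (μA t))) :
    IsProbabilityMeasure
        (smoothP N d μA μB (volume.withDensity (fun x => ENNReal.ofReal (γA x)))) ∧
      (∀ i : Fin N,
        (smoothP N d μA μB (volume.withDensity (fun x => ENNReal.ofReal (γA x)))).map
            (fun x => x i) =
          volume.withDensity (fun t => ENNReal.ofReal (μB t))) ∧
      ∃ ρ : (Fin N → Fin d → ℝ) → ℝ, Measurable ρ ∧ (∀ x, 0 ≤ ρ x) ∧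
        smoothP N d μA μB (volume.withDensity (fun x => ENNReal.ofReal (γA x))) =
          volume.withDensity (fun x => ENNReal.ofReal (ρ x)) := by
  set ν := volume.withDensity fun x => ENNReal.ofReal (γA x)
  have : IsProbabilityMeasure ν := isProbabilityMeasure_withDensity_ofReal (ae_of_all _ hγA0) hγA1
  have : IsProbabilityMeasure (volume.withDensity fun t => ENNReal.ofReal (μA t)) := by
    rw [← hmarg ⟨0, hN⟩]
    exact Measure.isProbabilityMeasure_map (measurable_pi_apply _).aemeasurable
  obtain ⟨hμAi, hμA1⟩ := integrable_and_integral_eq_one_of_isProbabilityMeasure_withDensity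
    hμAm.aestronglyMeasurable (hμA0.mono fun _ h => h.le)
  have hμBi : Integrable μB := .of_integral_ne_zero (by rw [hμB1]; exact one_ne_zero)
  have hmargP := map_eval_smoothP hμAm hμBm hμAi hμBi hμA0 (ae_of_all _ hμB0)
    (hμA1.trans hμB1.symm) hmarg
  have hP : IsProbabilityMeasure (smoothP N d μA μB ν) := by
    have := isProbabilityMeasure_withDensity_ofReal (ae_of_all _ hμB0) hμB1
    rw [← hmargP ⟨0, hN⟩] at this
    exact Measure.isProbabilityMeasure_of_map fun x => x ⟨0, hN⟩
  exact ⟨hP, hmargP, Measure.exists_density_of_absolutelyContinuous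
    (smoothP_absolutelyContinuous (withDensity_absolutelyContinuous _ _) hμAm hμBm
      (integrable_fB hμAi hμBi))⟩

/-- If all one-body marginals of the probability density `γ_A` equal `μ_A` (with `μ_A > 0`
a.e.) and `μ_B` is a probability density, then `Pγ_A` is a probability density on `ℝ^{Nd}`
all of whose one-body marginals equal `μ_B`. -/
theorem smoothP_marginals (N d : ℕ) (hN : 1 ≤ N)
    (γA : (Fin N → Fin d → ℝ) → ℝ) (μA μB : (Fin d → ℝ) → ℝ)
    (hγAm : Measurable γA) (hγA0 : ∀ x, 0 ≤ γA x) (hγA1 : ∫ x, γA x = 1)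
    (hμAm : Measurable μA) (hμA0 : ∀ᵐ x, 0 < μA x)
    (hμBm : Measurable μB) (hμB0 : ∀ x, 0 ≤ μB x) (hμB1 : ∫ x, μB x = 1)
    (hmarg : ∀ i : Fin N,
      (volume.withDensity (fun x => ENNReal.ofReal (γA x))).map (fun x => x i) =
        volume.withDensity (fun t => ENNReal.ofReal (μA t))) :
    IsProbabilityMeasure
        (smoothP N d μA μB (volume.withDensity (fun x => ENNReal.ofReal (γA x)))) ∧
      (∀ i : Fin N,
        (smoothP N d μA μB (volume.withDensity (fun x => ENNReal.ofReal (γA x)))).map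
            (fun x => x i) =
          volume.withDensity (fun t => ENNReal.ofReal (μB t))) ∧
      ∃ ρ : (Fin N → Fin d → ℝ) → ℝ, Measurable ρ ∧ (∀ x, 0 ≤ ρ x) ∧
        smoothP N d μA μB (volume.withDensity (fun x => ENNReal.ofReal (γA x))) =
          volume.withDensity (fun x => ENNReal.ofReal (ρ x)) :=
  smoothP_marginals_general N d hN γA μA μB hγA0 hγA1 hμAm hμA0 hμBm hμB0 hμB1 hmarg
end

section
/- Let ν be a probability measure on ℝⁿ with density v ∈ L¹(ℝⁿ), let M_kν be its marginal on the first k coordinates. Let X ⊆ ℝ^m with probability measure μ and T : X → ℝ^k a bijection onto its image pushing μ forward to M_kν. Then the map Lf(y) := √(v(y)) · (T_♯f)(y_1,…,y_k) is a unitary (inner-product-preserving) map from L²(X, dμ) to L²(ℝⁿ, dy). -/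
/-!
Since `|√v|² = v`, the left-hand integrand is `v(y) · h(y₁)` with `h = (f ∘ S) · conj (g ∘ S)`,
so the left-hand side is the integral of `h` against the marginal of `v dy`, i.e. against
`T_♯μ`. A measurable left inverse makes `T` a measurable embedding, so this pulls back to
`∫ h ∘ T dμ = ∫ f · conj g dμ`.
-/

open MeasureTheory Function

section LeftInverse

variable {α β E : Type*} [MeasurableSpace α] [MeasurableSpace β] [MeasurableEq β]
  {μ : Measure α} {T : α → β} {S : β → α}

theorem MeasurableEmbedding.of_leftInverse (hT : Measurable T) (hS : Measurable S)
    (hST : LeftInverse S T) : MeasurableEmbedding T := by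
  refine .of_measurable_inverse hT ?_ hS hST
  convert measurableSet_eq_fun (hT.comp hS) measurable_id using 1
  ext z
  exact ⟨fun ⟨x, hx⟩ => hx ▸ congrArg T (hST x), fun h => ⟨_, h⟩⟩

theorem MeasureTheory.AEStronglyMeasurable.comp_leftInverse_map [TopologicalSpace E]
    {h : α → E} (hh : AEStronglyMeasurable h μ) (hT : Measurable T) (hS : Measurable S)
    (hST : LeftInverse S T) : AEStronglyMeasurable (h ∘ S) (μ.map T) := by
  rw [(MeasurableEmbedding.of_leftInverse hT hS hST).aestronglyMeasurable_map_iff]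
  simpa [comp_def, hST _] using hh

theorem integral_map_comp_leftInverse [NormedAddCommGroup E] [NormedSpace ℝ E]
    (hT : Measurable T) (hS : Measurable S) (hST : LeftInverse S T) (h : α → E) :
    ∫ z, h (S z) ∂μ.map T = ∫ x, h x ∂μ := by
  simp_rw [(MeasurableEmbedding.of_leftInverse hT hS hST).integral_map, hST _]

end LeftInverse

theorem integral_smul_comp_eq_integral_map_withDensity {α γ E : Type*} [MeasurableSpace α]
    [MeasurableSpace γ] [NormedAddCommGroup E] [NormedSpace ℝ E] {μ : Measure α}
    {v : α → ℝ} (hvm : Measurable v) (hv0 : ∀ a, 0 ≤ v a) {φ : α → γ} (hφ : Measurable φ)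
    {H : γ → E}
    (hH : AEStronglyMeasurable H ((μ.withDensity fun a => ENNReal.ofReal (v a)).map φ)) :
    ∫ a, v a • H (φ a) ∂μ = ∫ z, H z ∂(μ.withDensity fun a => ENNReal.ofReal (v a)).map φ := by
  rw [integral_map hφ.aemeasurable hH]
  -- `ENNReal.ofReal r` unfolds to `↑r.toNNReal`, so the library lemma applies as stated.
  have := integral_withDensity_eq_integral_smul (μ := μ) hvm.real_toNNReal fun a => H (φ a)
  simp_rw [NNReal.smul_def, Real.coe_toNNReal _ (hv0 _)] at this
  exact this.symm

theorem sqrt_mul_mul_conj_sqrt_mul {r : ℝ} (hr : 0 ≤ r) (a b : ℂ) :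
    ((Real.sqrt r : ℂ) * a) * (starRingEnd ℂ) ((Real.sqrt r : ℂ) * b)
      = r • (a * (starRingEnd ℂ) b) := by
  rw [map_mul, Complex.conj_ofReal, mul_mul_mul_comm, ← Complex.ofReal_mul,
    Real.mul_self_sqrt hr, Complex.real_smul]

theorem marginal_pushforward_unitary_general (m k l : ℕ) (X : Set (Fin m → ℝ))
    (μ : Measure X)
    (v : (Fin k → ℝ) × (Fin l → ℝ) → ℝ) (hvm : Measurable v) (hv0 : ∀ y, 0 ≤ v y)
    (T : X → Fin k → ℝ) (hT : Measurable T) (S : (Fin k → ℝ) → X)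
    (hS : Measurable S) (hST : ∀ x, S (T x) = x)
    (hpush : μ.map T =
      ((volume.withDensity fun y => ENNReal.ofReal (v y)).map Prod.fst))
    (f g : X → ℂ) (hf : MemLp f 2 μ) (hg : MemLp g 2 μ) :
    ∫ y : (Fin k → ℝ) × (Fin l → ℝ),
        ((Real.sqrt (v y) : ℂ) * f (S y.1)) *
          (starRingEnd ℂ) ((Real.sqrt (v y) : ℂ) * g (S y.1)) =
      ∫ x, f x * (starRingEnd ℂ) (g x) ∂μ := by
  have hfg : AEStronglyMeasurable (fun x => f x * starRingEnd ℂ (g x)) μ :=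
    hf.aestronglyMeasurable.mul
      (Complex.continuous_conj.comp_aestronglyMeasurable hg.aestronglyMeasurable)
  have hfgS := hpush ▸ hfg.comp_leftInverse_map hT hS hST
  calc _ = ∫ y : (Fin k → ℝ) × (Fin l → ℝ),
          v y • (f (S y.1) * starRingEnd ℂ (g (S y.1))) := by
        simp_rw [sqrt_mul_mul_conj_sqrt_mul (hv0 _)]
    _ = ∫ z, f (S z) * starRingEnd ℂ (g (S z)) ∂μ.map T := by
        rw [hpush]
        exact integral_smul_comp_eq_integral_map_withDensity hvm hv0 measurable_fst hfgS
    _ = ∫ x, f x * starRingEnd ℂ (g x) ∂μ :=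
        integral_map_comp_leftInverse hT hS hST fun x => f x * starRingEnd ℂ (g x)

/-- Let `ν` be a probability measure on `ℝⁿ = ℝᵏ × ℝˡ` with density `v`, and
`T : X → ℝᵏ` a measurable injection (with left inverse `S`) pushing the probability
measure `μ` on the Borel set `X ⊆ ℝ^m` forward to the marginal `M_kν`. Then
`Lf(y) = √(v(y)) · f(T⁻¹(y₁,…,y_k))` is unitary from `L²(X, μ)` to `L²(ℝⁿ, dy)`. -/
theorem marginal_pushforward_unitary (m k l : ℕ) (X : Set (Fin m → ℝ))
    (hX : MeasurableSet X) (μ : Measure X) [IsProbabilityMeasure μ]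
    (v : (Fin k → ℝ) × (Fin l → ℝ) → ℝ) (hvm : Measurable v) (hv0 : ∀ y, 0 ≤ v y)
    (hv1 : ∫ y, v y = 1)
    (T : X → Fin k → ℝ) (hT : Measurable T) (S : (Fin k → ℝ) → X)
    (hS : Measurable S) (hST : ∀ x, S (T x) = x)
    (hpush : μ.map T =
      ((volume.withDensity fun y => ENNReal.ofReal (v y)).map Prod.fst))
    (f g : X → ℂ) (hf : MemLp f 2 μ) (hg : MemLp g 2 μ) :
    ∫ y : (Fin k → ℝ) × (Fin l → ℝ),
        ((Real.sqrt (v y) : ℂ) * f (S y.1)) *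
          (starRingEnd ℂ) ((Real.sqrt (v y) : ℂ) * g (S y.1)) =
      ∫ x, f x * (starRingEnd ℂ) (g x) ∂μ :=
  marginal_pushforward_unitary_general m k l X μ v hvm hv0 T hT S hS hST hpush f g hf hg
end

section
/- Let ν be a probability measure on ℝⁿ with density v ∈ L¹(ℝⁿ), and let L be the embedding of the previous construction with k = 1 (Lf(y) = √v(y) · T_♯f(y_1) where T : [0,1] → ℝ pushes Lebesgue measure forward to M₁ν). If φ_1,…,φ_N are orthonormal in L²([0,1]) and Σ_{i=1}^N |φ_i(x)|² = N for all x ∈ [0,1], then Lφ_1,…,Lφ_N are orthonormal in L²(ℝⁿ) and Σ_{i=1}^N |Lφ_i(y)|² = N·v(y) for all y ∈ ℝⁿ. -/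
open MeasureTheory

/-- Orthonormal orbitals with a prescribed density: if `φ_1,…,φ_N` are orthonormal in
`L²([0,1])` with constant density `Σ|φ_i|² = N`, and `T : [0,1] → ℝ` (with inverse `S`)
pushes Lebesgue measure on `[0,1]` forward to the first-coordinate marginal `M₁ν` of a
probability measure `ν = v dy` on `ℝⁿ = ℝ × ℝˡ`, then `Lφ_i(y) = √(v(y)) φ_i(T⁻¹(y₁))`
are orthonormal in `L²(ℝⁿ)` and satisfy `Σ|Lφ_i(y)|² = N v(y)` for all `y`. -/
theorem harriman_orbitals (l N : ℕ)
    (v : ℝ × (Fin l → ℝ) → ℝ) (hvm : Measurable v) (hv0 : ∀ y, 0 ≤ v y)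
    (hv1 : ∫ y, v y = 1)
    (T : ℝ → ℝ) (hT : Measurable T) (S : ℝ → ℝ) (hS : Measurable S)
    (hST : ∀ x ∈ Set.Icc (0 : ℝ) 1, S (T x) = x)
    (hSrange : ∀ y : ℝ, S y ∈ Set.Icc (0 : ℝ) 1)
    (hpush : (volume.restrict (Set.Icc (0 : ℝ) 1)).map T =
      ((volume.withDensity fun y => ENNReal.ofReal (v y)).map Prod.fst))
    (φ : Fin N → ℝ → ℂ) (hφm : ∀ i, Measurable (φ i))
    (horth : ∀ i j : Fin N,
      ∫ x in Set.Icc (0 : ℝ) 1, φ i x * (starRingEnd ℂ) (φ j x) =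
        if i = j then 1 else 0)
    (hdens : ∀ x ∈ Set.Icc (0 : ℝ) 1, ∑ i : Fin N, ‖φ i x‖ ^ 2 = (N : ℝ)) :
    (∀ i j : Fin N,
      ∫ y : ℝ × (Fin l → ℝ),
          ((Real.sqrt (v y) : ℂ) * φ i (S y.1)) *
            (starRingEnd ℂ) ((Real.sqrt (v y) : ℂ) * φ j (S y.1)) =
        if i = j then 1 else 0) ∧
    (∀ y : ℝ × (Fin l → ℝ),
      ∑ i : Fin N, ‖(Real.sqrt (v y) : ℂ) * φ i (S y.1)‖ ^ 2 = (N : ℝ) * v y) := by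
  constructor
  · intro i j
    set g : ℝ → ℂ := fun t => φ i (S t) * (starRingEnd ℂ) (φ j (S t)) with hg
    have hgm : Measurable g := ((hφm i).comp hS).mul (continuous_star.measurable.comp ((hφm j).comp hS))
    have step1 : (∫ y : ℝ × (Fin l → ℝ),
        ((Real.sqrt (v y) : ℂ) * φ i (S y.1)) *
          (starRingEnd ℂ) ((Real.sqrt (v y) : ℂ) * φ j (S y.1)))
        = ∫ y : ℝ × (Fin l → ℝ), (v y : ℝ) • g y.1 := by
      congr 1; funext y
      have hv : ((v y : ℝ) : ℂ) = (Real.sqrt (v y) : ℂ) * (Real.sqrt (v y) : ℂ) := by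
        norm_cast
        rw [Real.mul_self_sqrt (hv0 y)]
      simp only [map_mul, hg, Complex.conj_ofReal, Complex.real_smul, hv]
      ring
    rw [step1]
    have step2 : (∫ y : ℝ × (Fin l → ℝ), (v y : ℝ) • g y.1)
        = ∫ y : ℝ × (Fin l → ℝ), g y.1
            ∂(volume.withDensity fun y => ENNReal.ofReal (v y)) := by
      rw [show (fun y : ℝ × (Fin l → ℝ) => ENNReal.ofReal (v y))
          = (fun y => ((v y).toNNReal : ENNReal)) from rfl,
        integral_withDensity_eq_integral_smul hvm.real_toNNReal]
      congr 1; funext y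
      rw [NNReal.smul_def, Real.coe_toNNReal _ (hv0 y)]
    rw [step2]
    have step3 : (∫ y : ℝ × (Fin l → ℝ), g y.1
            ∂(volume.withDensity fun y => ENNReal.ofReal (v y)))
        = ∫ t, g t ∂((volume.withDensity fun y => ENNReal.ofReal (v y)).map Prod.fst) := by
      rw [integral_map measurable_fst.aemeasurable hgm.aestronglyMeasurable]
    rw [step3, ← hpush, integral_map hT.aemeasurable hgm.aestronglyMeasurable]
    have step4 : (∫ x in Set.Icc (0:ℝ) 1, g (T x))
        = ∫ x in Set.Icc (0:ℝ) 1, φ i x * (starRingEnd ℂ) (φ j x) := by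
      apply setIntegral_congr_fun measurableSet_Icc
      intro x hx
      simp [hg, hST x hx]
    rw [step4, horth i j]
  · intro y
    have : ∀ i : Fin N, ‖(Real.sqrt (v y) : ℂ) * φ i (S y.1)‖ ^ 2
        = v y * ‖φ i (S y.1)‖ ^ 2 := by
      intro i
      rw [norm_mul, mul_pow, Complex.norm_real, Real.norm_eq_abs,
        abs_of_nonneg (Real.sqrt_nonneg _), Real.sq_sqrt (hv0 y)]
    simp only [this, ← Finset.mul_sum, hdens (S y.1) (hSrange y.1)]
    ring
end

section
/- Let x* ∈ (0,1] and let u : [0, x*] → ℝ be absolutely continuous with u(0) = 0 and u(x*) = (1/2) x*^{1/3}. Then the functional G[u] = ∫₀^{x*} x² u'(x)⁶ dx satisfies G[u] ≥ (3/10)⁶ · (5/3) · x*^{−1}, with equality for u₀(x) = (1/2) x^{3/5} x*^{−4/15}. -/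
/-!
Write `∫|u'| = ∫ x^{-1/3} · (x^{1/3} |u'|)` and apply Hölder with exponents `6/5` and `6`:
`(x*^{1/3}/2)^6 = u(x*)^6 ≤ (∫₀^{x*} x^{-2/5})^5 · G[u] = ((5/3) x*^{3/5})^5 · G[u]`,
which rearranges to the bound. Equality in Hölder forces `x² u'^6 ∝ x^{-2/5}`, i.e.
`u' ∝ x^{-2/5}`, which is `u₀'`; its value of `G` is a direct computation.
-/

open MeasureTheory ENNReal

theorem lintegral_rpow_le_weighted_holder {α : Type*} [MeasurableSpace α] {μ : Measure α}
    {p : ℝ} (hp : 1 < p) {f w : α → ℝ≥0∞} (hf : AEMeasurable f μ)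
    (hw : AEMeasurable w μ) (hw0 : ∀ᵐ x ∂μ, w x ≠ 0) (hw_top : ∀ᵐ x ∂μ, w x ≠ ⊤) :
    (∫⁻ x, f x ∂μ) ^ p ≤
      (∫⁻ x, w x ^ (-(p - 1)⁻¹) ∂μ) ^ (p - 1) * ∫⁻ x, w x * f x ^ p ∂μ := by
  have hp0 : 0 ≤ p := by linarith
  have hp1 : p - 1 ≠ 0 := by linarith
  -- Hölder for the splitting `f = w ^ (-1/p) * (w ^ (1/p) * f)`
  have holder := lintegral_mul_le_Lp_mul_Lq μ (Real.HolderConjugate.conjExponent hp).symm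
    (f := fun x ↦ w x ^ (-1 / p)) (g := fun x ↦ w x ^ (1 / p) * f x)
    (hw.pow_const _) ((hw.pow_const _).mul hf)
  have hsplit : ∫⁻ x, w x ^ (-1 / p) * (w x ^ (1 / p) * f x) ∂μ =
      ∫⁻ x, f x ∂μ := by
    refine lintegral_congr_ae ?_
    filter_upwards [hw0, hw_top] with x hx0 hx_top
    rw [← mul_assoc, ← rpow_add _ _ hx0 hx_top, neg_div, neg_add_cancel,
      rpow_zero, one_mul]
  have hweight : ∀ x, (w x ^ (-1 / p)) ^ Real.conjExponent p = w x ^ (-(p - 1)⁻¹) := by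
    intro x
    rw [← rpow_mul, Real.conjExponent]
    congr 1
    field_simp
  have hweighted : ∀ x, (w x ^ (1 / p) * f x) ^ p = w x * f x ^ p := by
    intro x
    rw [mul_rpow_of_nonneg _ _ hp0, ← rpow_mul, one_div_mul_cancel (by linarith), rpow_one]
  simp only [Pi.mul_apply, hsplit, hweight, hweighted] at holder
  calc (∫⁻ x, f x ∂μ) ^ p
      ≤ ((∫⁻ x, w x ^ (-(p - 1)⁻¹) ∂μ) ^ (1 / Real.conjExponent p) *
          (∫⁻ x, w x * f x ^ p ∂μ) ^ (1 / p)) ^ p := rpow_le_rpow holder hp0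
    _ = _ := by
      rw [mul_rpow_of_nonneg _ _ hp0, ← rpow_mul, ← rpow_mul, one_div_mul_cancel (by linarith),
        rpow_one, Real.conjExponent]
      congr 2
      field_simp

theorem lintegral_Ioc_zero_ofReal_rpow {r b : ℝ} (hr : -1 < r) (hb : 0 ≤ b) :
    ∫⁻ x in Set.Ioc 0 b, ENNReal.ofReal (x ^ r) = ENNReal.ofReal (b ^ (r + 1) / (r + 1)) := by
  have hint : IntegrableOn (fun x : ℝ ↦ x ^ r) (Set.Ioc 0 b) :=
    (intervalIntegrable_iff_integrableOn_Ioc_of_le hb).mp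
      (intervalIntegral.intervalIntegrable_rpow' hr)
  rw [← ofReal_integral_eq_lintegral_ofReal hint
      ((ae_restrict_mem measurableSet_Ioc).mono fun x hx ↦ Real.rpow_nonneg hx.1.le r),
    ← intervalIntegral.integral_of_le hb, integral_rpow (Or.inl hr),
    Real.zero_rpow (by linarith), sub_zero]

theorem ofReal_intervalIntegral_le_lintegral_abs {f : ℝ → ℝ} {a b : ℝ} (hab : a ≤ b) :
    ENNReal.ofReal (∫ x in a..b, f x) ≤ ∫⁻ x in Set.Ioc a b, ENNReal.ofReal |f x| := by
  calc ENNReal.ofReal (∫ x in a..b, f x)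
      ≤ ‖∫ x in Set.Ioc a b, f x‖ₑ := by
        rw [intervalIntegral.integral_of_le hab, Real.enorm_eq_ofReal_abs]
        exact ENNReal.ofReal_le_ofReal (le_abs_self _)
    _ ≤ ∫⁻ x in Set.Ioc a b, ‖f x‖ₑ := enorm_integral_le_lintegral_enorm _
    _ = ∫⁻ x in Set.Ioc a b, ENNReal.ofReal |f x| := by simp only [Real.enorm_eq_ofReal_abs]

theorem ofReal_intervalIntegral_pow_six_le {b : ℝ} (hb : 0 < b) {v : ℝ → ℝ}
    (hv : IntervalIntegrable v volume 0 b) :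
    ENNReal.ofReal (∫ x in 0..b, v x) ^ 6 ≤
      ENNReal.ofReal (b ^ (3 / 5 : ℝ) / (3 / 5)) ^ 5 *
        ∫⁻ x in Set.Ioc 0 b, ENNReal.ofReal (x ^ 2 * v x ^ 6) := by
  have hv_meas : AEMeasurable v (volume.restrict (Set.Ioc 0 b)) :=
    ((intervalIntegrable_iff_integrableOn_Ioc_of_le hb.le).mp hv).aemeasurable
  have holder := lintegral_rpow_le_weighted_holder (p := 6) (by norm_num)
    (f := fun x ↦ ENNReal.ofReal |v x|) (w := fun x ↦ ENNReal.ofReal (x ^ 2))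
    (by fun_prop) (by fun_prop)
    ((ae_restrict_mem measurableSet_Ioc).mono fun x hx ↦ by simpa using hx.1.ne')
    (ae_of_all _ fun _ ↦ ENNReal.ofReal_ne_top)
  have hweight : ∫⁻ x in Set.Ioc 0 b, ENNReal.ofReal (x ^ 2) ^ (-(6 - 1 : ℝ)⁻¹) =
      ENNReal.ofReal (b ^ (3 / 5 : ℝ) / (3 / 5)) := by
    rw [setLIntegral_congr_fun measurableSet_Ioc
      (g := fun x ↦ ENNReal.ofReal (x ^ (-2 / 5 : ℝ))) fun x hx ↦ by
        rw [ENNReal.ofReal_rpow_of_pos (pow_pos hx.1 2), ← Real.rpow_natCast_mul hx.1.le]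
        norm_num,
      lintegral_Ioc_zero_ofReal_rpow (by norm_num) hb.le]
    norm_num
  have hweighted : ∀ x, ENNReal.ofReal (x ^ 2) * ENNReal.ofReal |v x| ^ (6 : ℝ) =
      ENNReal.ofReal (x ^ 2 * v x ^ 6) := fun x ↦ by
    rw [ENNReal.ofReal_rpow_of_nonneg (abs_nonneg _) (by norm_num),
      ← ENNReal.ofReal_mul (sq_nonneg x), Real.rpow_ofNat, Even.pow_abs ⟨3, rfl⟩]
  simp only [hweight, hweighted] at holder
  calc ENNReal.ofReal (∫ x in 0..b, v x) ^ 6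
      ≤ (∫⁻ x in Set.Ioc 0 b, ENNReal.ofReal |v x|) ^ (6 : ℝ) := by
        rw [ENNReal.rpow_ofNat]
        gcongr
        exact ofReal_intervalIntegral_le_lintegral_abs hb.le
    _ ≤ _ := by
        convert holder using 2
        norm_num

theorem Real.pow_rpow_natCast_div {t : ℝ} (ht : 0 ≤ t) {n : ℕ} (hn : n ≠ 0) (k : ℕ) :
    (t ^ n) ^ (k / n : ℝ) = t ^ k := by
  rw [← Real.rpow_natCast_mul ht, mul_div_cancel₀ _ (Nat.cast_ne_zero.mpr hn), Real.rpow_natCast]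

-- Both halves are stated for `x* = t ^ 15`, which makes every power of `x*` occurring in them
-- an integer power of `t`.
theorem ofReal_div_le_lintegral_sq_mul_pow_six {t : ℝ} (ht : 0 < t) {v : ℝ → ℝ}
    (hv : IntervalIntegrable v volume 0 (t ^ 15))
    (hv_int : ∫ x in 0..t ^ 15, v x = 1 / 2 * (t ^ 15) ^ (1 / 3 : ℝ)) :
    ENNReal.ofReal ((3 / 10 : ℝ) ^ 6 * (5 / 3) / t ^ 15) ≤
      ∫⁻ x in Set.Ioc 0 (t ^ 15), ENNReal.ofReal (x ^ 2 * v x ^ 6) := by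
  have hbound := ofReal_intervalIntegral_pow_six_le (by positivity) hv
  have hB : 0 < (t ^ 15) ^ (3 / 5 : ℝ) / (3 / 5) := by positivity
  rw [← ENNReal.mul_le_mul_iff_right (pow_ne_zero 5 (ENNReal.ofReal_pos.mpr hB).ne')
    (ENNReal.pow_ne_top ENNReal.ofReal_ne_top)]
  refine le_of_eq_of_le ?_ hbound
  rw [hv_int, ← ENNReal.ofReal_pow hB.le, ← ENNReal.ofReal_pow (by positivity),
    ← ENNReal.ofReal_mul (by positivity)]
  congr 1
  rw [show (1 / 3 : ℝ) = (5 : ℕ) / (15 : ℕ) by norm_num,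
    show (3 / 5 : ℝ) = (9 : ℕ) / (15 : ℕ) by norm_num,
    Real.pow_rpow_natCast_div ht.le (by norm_num), Real.pow_rpow_natCast_div ht.le (by norm_num)]
  field_simp
  ring

theorem lintegral_sq_mul_minimizer_pow_six {t : ℝ} (ht : 0 < t) :
    ∫⁻ x in Set.Ioc 0 (t ^ 15),
        ENNReal.ofReal (x ^ 2 * ((3 / 10) * x ^ (-(2 : ℝ) / 5) * (t ^ 15) ^ (-(4 : ℝ) / 15)) ^ 6) =
      ENNReal.ofReal ((3 / 10 : ℝ) ^ 6 * (5 / 3) / t ^ 15) := by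
  have hintegrand : ∀ x ∈ Set.Ioc (0 : ℝ) (t ^ 15),
      ENNReal.ofReal (x ^ 2 * ((3 / 10) * x ^ (-(2 : ℝ) / 5) * (t ^ 15) ^ (-(4 : ℝ) / 15)) ^ 6) =
        ENNReal.ofReal ((3 / 10) ^ 6 * ((t ^ 4)⁻¹) ^ 6) * ENNReal.ofReal (x ^ (-(2 : ℝ) / 5)) :=
    fun x hx ↦ by
      have hx2 : x ^ 2 * (x ^ (-(2 : ℝ) / 5)) ^ 6 = x ^ (-(2 : ℝ) / 5) := by
        rw [← Real.rpow_mul_natCast hx.1.le, ← Real.rpow_natCast x 2, ← Real.rpow_add hx.1]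
        norm_num
      rw [show -(4 : ℝ) / 15 = -((4 : ℕ) / (15 : ℕ)) by norm_num, Real.rpow_neg (by positivity),
        Real.pow_rpow_natCast_div ht.le (by norm_num),
        ← ENNReal.ofReal_mul (by positivity)]
      congr 1
      linear_combination (3 / 10) ^ 6 * ((t ^ 4)⁻¹) ^ 6 * hx2
  rw [setLIntegral_congr_fun measurableSet_Ioc hintegrand,
    lintegral_const_mul' _ _ ENNReal.ofReal_ne_top,
    lintegral_Ioc_zero_ofReal_rpow (by norm_num) (by positivity),
    ← ENNReal.ofReal_mul (by positivity)]
  congr 1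
  rw [show -(2 : ℝ) / 5 + 1 = (9 : ℕ) / (15 : ℕ) by norm_num,
    Real.pow_rpow_natCast_div ht.le (by norm_num)]
  field_simp
  ring

/-- Explicit minimization of `G[u] = ∫₀^{x*} x² u'(x)⁶ dx` over absolutely continuous
`u` with `u(0) = 0`, `u(x*) = ½ x*^{1/3}`: one has `G[u] ≥ (3/10)⁶ (5/3) x*⁻¹`, with
equality for `u₀(x) = ½ x^{3/5} x*^{−4/15}` (whose derivative is
`u₀'(x) = (3/10) x^{−2/5} x*^{−4/15}`). -/
theorem G_functional_lower_bound (xs : ℝ) (hxs : xs ∈ Set.Ioc (0 : ℝ) 1) :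
    (∀ u u' : ℝ → ℝ,
      (∀ x ∈ Set.Icc (0 : ℝ) xs, u x = ∫ t in (0 : ℝ)..x, u' t) →
      IntervalIntegrable u' volume 0 xs →
      u xs = (1 / 2) * xs ^ ((1 : ℝ) / 3) →
      ENNReal.ofReal ((3 / 10 : ℝ) ^ 6 * (5 / 3) / xs) ≤
        ∫⁻ x in Set.Ioc (0 : ℝ) xs, ENNReal.ofReal (x ^ 2 * u' x ^ 6)) ∧
    ∫⁻ x in Set.Ioc (0 : ℝ) xs,
        ENNReal.ofReal
          (x ^ 2 * ((3 / 10) * x ^ (-(2 : ℝ) / 5) * xs ^ (-(4 : ℝ) / 15)) ^ 6) =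
      ENNReal.ofReal ((3 / 10 : ℝ) ^ 6 * (5 / 3) / xs) := by
  obtain ⟨t, ht, rfl⟩ : ∃ t > 0, xs = t ^ 15 :=
    ⟨xs ^ (1 / 15 : ℝ), Real.rpow_pos_of_pos hxs.1 _,
      by rw [← Real.rpow_mul_natCast hxs.1.le]; norm_num⟩
  exact ⟨fun u u' hu hu' huxs ↦ ofReal_div_le_lintegral_sq_mul_pow_six ht hu'
      (by rw [← hu _ ⟨by positivity, le_rfl⟩, huxs]),
    lintegral_sq_mul_minimizer_pow_six ht⟩
end

section
/- Let ℬ be the set of absolutely continuous u : [0,1] → ℝ with u(0) = 0, u(1) = 1, and define J[u] = ∫₀¹ (x − u(x)³)² u'(x)⁶ dx and T[u] = ∫₀¹ u'(x)² dx. Then every u ∈ ℬ with T[u] < ∞ satisfies J[u] ≥ (1/2)(7/8)²(3/10)⁵. In particular inf over ℬ ∩ {T < ∞} of (J + ε²T) is bounded below by (1/2)(7/8)²(3/10)⁵ for every ε > 0. -/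
open MeasureTheory Set Filter Topology
open scoped ENNReal

/-!
By Cauchy–Schwarz, `u t ^ 2 ≤ t * T[u]`, so `u ^ 3 < x / 8` near `0`, while `u 1 ^ 3 = 1 > 1 / 8`.
Let `b` be the first point where `u ^ 3` reaches `x / 8`. On `(0, b)` the weight `(x - u ^ 3) ^ 2`
is at least `(7 / 8) ^ 2 * x ^ 2`, and Hölder's inequality with exponents `6` and `6 / 5` applied to
`|u'| = x ^ (1 / 3) * |u'| * x ^ (-1 / 3)` gives
`b ^ 2 / 64 ≤ u b ^ 6 ≤ (∫₀ᵇ |u'|) ^ 6 ≤ (5 / 3) ^ 5 * b ^ 3 * (64 / 49) * J[u]`.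
Hence `J[u] ≥ (49 / 64) * (3 / 5) ^ 5 / (64 * b)`, and `b ≤ 1`.
-/

theorem sq_intervalIntegral_le_mul_intervalIntegral_sq {f : ℝ → ℝ} {a b : ℝ} (hab : a ≤ b)
    (hf : IntervalIntegrable f volume a b)
    (hf2 : IntervalIntegrable (fun x => f x ^ 2) volume a b) :
    (∫ x in a..b, f x) ^ 2 ≤ (b - a) * ∫ x in a..b, f x ^ 2 := by
  have hquad : ∀ c : ℝ, 0 ≤ (b - a) * (c * c) + (-2 * ∫ x in a..b, f x) * c
      + ∫ x in a..b, f x ^ 2 := by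
    intro c
    have hexp : ∫ x in a..b, (f x - c) ^ 2 =
        (b - a) * (c * c) + (-2 * ∫ x in a..b, f x) * c + ∫ x in a..b, f x ^ 2 := by
      have : ∀ x, (f x - c) ^ 2 = f x ^ 2 - 2 * c * f x + c * c := fun x => by ring
      simp only [this]
      rw [intervalIntegral.integral_add (hf2.sub (hf.const_mul _)) intervalIntegrable_const,
        intervalIntegral.integral_sub hf2 (hf.const_mul _), intervalIntegral.integral_const_mul,
        intervalIntegral.integral_const, smul_eq_mul]
      ring
    rw [← hexp]
    exact intervalIntegral.integral_nonneg hab fun x _ => sq_nonneg _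
  have hdisc := discrim_le_zero hquad
  rw [discrim] at hdisc
  nlinarith

theorem exists_first_nonneg_of_eventually_neg {g : ℝ → ℝ} {a c : ℝ} (hac : a < c)
    (hg : ContinuousOn g (Icc a c)) (hneg : ∀ᶠ x in 𝓝[>] a, g x < 0) (hc : 0 ≤ g c) :
    ∃ b ∈ Ioc a c, 0 ≤ g b ∧ ∀ x ∈ Ioo a b, g x < 0 := by
  set Z := Icc a c ∩ g ⁻¹' Ici 0
  have hZ : IsClosed Z := hg.preimage_isClosed_of_isClosed isClosed_Icc isClosed_Ici
  obtain ⟨x₀, hx₀, hsub⟩ := mem_nhdsGT_iff_exists_Ioo_subset.mp hneg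
  have hbdd : BddBelow (Z ∩ Ioi a) := ⟨a, fun z hz => hz.2.le⟩
  have hne : (Z ∩ Ioi a).Nonempty := ⟨c, ⟨⟨hac.le, le_rfl⟩, hc⟩, hac⟩
  have hx₀b : x₀ ≤ sInf (Z ∩ Ioi a) := le_csInf hne fun z hz =>
    not_lt.mp fun hzx => (hsub ⟨hz.2, hzx⟩ : g z < 0).not_ge (show 0 ≤ g z from hz.1.2)
  have hbZ : sInf (Z ∩ Ioi a) ∈ Z :=
    closure_minimal inter_subset_left hZ (csInf_mem_closure hne hbdd)
  refine ⟨_, ⟨hx₀.trans_le hx₀b, hbZ.1.2⟩, hbZ.2, fun x hx => ?_⟩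
  by_contra! hgx
  have hxZ : x ∈ Z ∩ Ioi a := ⟨⟨⟨hx.1.le, hx.2.le.trans hbZ.1.2⟩, hgx⟩, hx.1⟩
  exact (csInf_le hbdd hxZ).not_gt hx.2

theorem lintegral_rpow_neg_two_fifths_Ioo {b : ℝ} (hb : 0 ≤ b) :
    ∫⁻ x in Ioo 0 b, ENNReal.ofReal (x ^ (-(2 : ℝ) / 5)) =
      ENNReal.ofReal (5 / 3 * b ^ ((3 : ℝ) / 5)) := by
  have hint : IntegrableOn (fun x : ℝ => x ^ (-(2 : ℝ) / 5)) (Ioc 0 b) :=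
    (intervalIntegral.intervalIntegrable_rpow' (by norm_num)).1
  rw [← ofReal_integral_eq_lintegral_ofReal (hint.mono_set Ioo_subset_Ioc_self)
      ((ae_restrict_iff' measurableSet_Ioo).2
        (ae_of_all _ fun x hx => Real.rpow_nonneg hx.1.le _)),
    ← integral_Ioc_eq_integral_Ioo, ← intervalIntegral.integral_of_le hb,
    integral_rpow (Or.inl (by norm_num))]
  congr 1
  norm_num
  ring

theorem lintegral_Ioo_enorm_pow_six_le {v : ℝ → ℝ} {b : ℝ} (hb : 0 ≤ b)
    (hv : AEMeasurable v (volume.restrict (Ioo 0 b))) :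
    (∫⁻ x in Ioo 0 b, ‖v x‖ₑ) ^ 6 ≤
      ENNReal.ofReal ((5 / 3) ^ 5 * b ^ 3) * ∫⁻ x in Ioo 0 b, ENNReal.ofReal (x ^ 2 * v x ^ 6) := by
  set f : ℝ → ℝ≥0∞ := fun x => ENNReal.ofReal (x ^ ((1 : ℝ) / 3) * |v x|)
  set w : ℝ → ℝ≥0∞ := fun x => ENNReal.ofReal (x ^ (-(1 : ℝ) / 3))
  have hf : AEMeasurable f (volume.restrict (Ioo 0 b)) := by fun_prop
  have hw : AEMeasurable w (volume.restrict (Ioo 0 b)) := by fun_prop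
  have hfw : ∫⁻ x in Ioo 0 b, ‖v x‖ₑ = ∫⁻ x in Ioo 0 b, (f * w) x := by
    refine setLIntegral_congr_fun measurableSet_Ioo fun x hx => ?_
    have hx : 0 < x := hx.1
    rw [Pi.mul_apply, ← ENNReal.ofReal_mul (by positivity), Real.enorm_eq_ofReal_abs]
    congr 1
    rw [mul_right_comm, ← Real.rpow_add hx]
    norm_num
  have hf6 : ∫⁻ x in Ioo 0 b, f x ^ (6 : ℝ) =
      ∫⁻ x in Ioo 0 b, ENNReal.ofReal (x ^ 2 * v x ^ 6) := by
    refine setLIntegral_congr_fun measurableSet_Ioo fun x hx => ?_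
    have hx : 0 < x := hx.1
    rw [ENNReal.ofReal_rpow_of_nonneg (by positivity) (by norm_num)]
    congr 1
    rw [show (6 : ℝ) = (6 : ℕ) by norm_num, Real.rpow_natCast, mul_pow, ← Real.rpow_natCast,
      ← Real.rpow_mul hx.le, pow_abs, abs_of_nonneg (by positivity)]
    norm_num
  have hw65 : ∫⁻ x in Ioo 0 b, w x ^ ((6 : ℝ) / 5) =
      ENNReal.ofReal (5 / 3 * b ^ ((3 : ℝ) / 5)) := by
    rw [← lintegral_rpow_neg_two_fifths_Ioo hb]
    refine setLIntegral_congr_fun measurableSet_Ioo fun x hx => ?_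
    have hx : 0 < x := hx.1
    rw [ENNReal.ofReal_rpow_of_nonneg (by positivity) (by norm_num), ← Real.rpow_mul hx.le]
    norm_num
  have hpq : Real.HolderConjugate 6 (6 / 5) :=
    Real.holderConjugate_iff.mpr ⟨by norm_num, by norm_num⟩
  have hHolder := ENNReal.lintegral_mul_le_Lp_mul_Lq (volume.restrict (Ioo 0 b)) hpq hf hw
  rw [← hfw, hf6, hw65] at hHolder
  calc (∫⁻ x in Ioo 0 b, ‖v x‖ₑ) ^ 6
      ≤ ((∫⁻ x in Ioo 0 b, ENNReal.ofReal (x ^ 2 * v x ^ 6)) ^ (1 / (6 : ℝ)) *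
          ENNReal.ofReal (5 / 3 * b ^ ((3 : ℝ) / 5)) ^ (1 / ((6 : ℝ) / 5))) ^ 6 := by
        gcongr
    _ = ENNReal.ofReal ((5 / 3) ^ 5 * b ^ 3) *
          ∫⁻ x in Ioo 0 b, ENNReal.ofReal (x ^ 2 * v x ^ 6) := by
        rw [mul_pow, ← ENNReal.rpow_natCast, ← ENNReal.rpow_natCast, ← ENNReal.rpow_mul,
          ← ENNReal.rpow_mul, ENNReal.ofReal_rpow_of_nonneg (by positivity) (by norm_num),
          Real.mul_rpow (by norm_num) (by positivity), ← Real.rpow_mul hb]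
        norm_num
        ring

theorem eventually_pow_three_lt_mul_of_sq_le {u : ℝ → ℝ} {C c : ℝ} (hc : 0 < c)
    (h : ∀ t ∈ Icc (0 : ℝ) 1, u t ^ 2 ≤ t * C) : ∀ᶠ t in 𝓝[>] 0, u t ^ 3 < c * t := by
  have hC : ∀ᶠ t in 𝓝[>] (0 : ℝ), t * C ^ 3 < c ^ 2 := by
    have : Tendsto (fun t : ℝ => t * C ^ 3) (𝓝 0) (𝓝 0) := by
      simpa using (tendsto_id (x := 𝓝 (0 : ℝ))).mul_const (C ^ 3)
    exact (this.mono_left nhdsWithin_le_nhds).eventually (gt_mem_nhds (by positivity))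
  filter_upwards [hC, Ioo_mem_nhdsGT one_pos] with t htC ht
  have hsq : (u t ^ 3) ^ 2 < (c * t) ^ 2 := calc
    (u t ^ 3) ^ 2 = (u t ^ 2) ^ 3 := by ring
    _ ≤ (t * C) ^ 3 := pow_le_pow_left₀ (sq_nonneg _) (h t (Ioo_subset_Icc_self ht)) 3
    _ = t ^ 2 * (t * C ^ 3) := by ring
    _ < t ^ 2 * c ^ 2 := mul_lt_mul_of_pos_left htC (by nlinarith [ht.1])
    _ = (c * t) ^ 2 := by ring
  exact (abs_lt.mp (abs_lt_of_sq_lt_sq hsq (by nlinarith [ht.1]))).2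

namespace Mania

variable {u u' : ℝ → ℝ}

theorem sq_le_mul_energy (hrep : ∀ x ∈ Icc (0 : ℝ) 1, u x = ∫ t in (0 : ℝ)..x, u' t)
    (hu' : IntervalIntegrable u' volume 0 1)
    (hT : IntervalIntegrable (fun t => u' t ^ 2) volume 0 1) {t : ℝ} (ht : t ∈ Icc (0 : ℝ) 1) :
    u t ^ 2 ≤ t * ∫ s in (0 : ℝ)..1, u' s ^ 2 := by
  have hsub : uIcc 0 t ⊆ uIcc (0 : ℝ) 1 := by
    rw [uIcc_of_le ht.1, uIcc_of_le zero_le_one]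
    exact Icc_subset_Icc_right ht.2
  calc u t ^ 2 ≤ (t - 0) * ∫ s in (0 : ℝ)..t, u' s ^ 2 := by
        rw [hrep t ht]
        exact sq_intervalIntegral_le_mul_intervalIntegral_sq ht.1 (hu'.mono_set hsub)
          (hT.mono_set hsub)
    _ ≤ t * ∫ s in (0 : ℝ)..1, u' s ^ 2 := by
        rw [sub_zero]
        exact mul_le_mul_of_nonneg_left (intervalIntegral.integral_mono_interval le_rfl ht.1 ht.2
          (ae_of_all _ fun s => sq_nonneg _) hT) ht.1

theorem lintegral_sq_mul_pow_six_le {b : ℝ} (h : ∀ x ∈ Ioo 0 b, u x ^ 3 - x / 8 < 0) :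
    ∫⁻ x in Ioo 0 b, ENNReal.ofReal (x ^ 2 * u' x ^ 6) ≤
      ENNReal.ofReal (64 / 49) *
        ∫⁻ x in Ioo 0 b, ENNReal.ofReal ((x - u x ^ 3) ^ 2 * u' x ^ 6) := by
  rw [← lintegral_const_mul' _ _ ENNReal.ofReal_ne_top]
  refine setLIntegral_mono' measurableSet_Ioo fun x hx => ?_
  rw [← ENNReal.ofReal_mul (by norm_num), ← mul_assoc]
  have h78 : (7 / 8) * x ≤ x - u x ^ 3 := by linarith [h x hx]
  have hsq : x ^ 2 ≤ 64 / 49 * (x - u x ^ 3) ^ 2 := by nlinarith [h78, hx.1]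
  gcongr

theorem constant_le_of_pow_six_le {b : ℝ} {J : ℝ≥0∞} (hb : b ∈ Ioc (0 : ℝ) 1)
    (h : ENNReal.ofReal (b ^ 2 / 64) ≤
      ENNReal.ofReal ((5 / 3) ^ 5 * b ^ 3) * (ENNReal.ofReal (64 / 49) * J)) :
    ENNReal.ofReal ((1 / 2 : ℝ) * (7 / 8) ^ 2 * (3 / 10) ^ 5) ≤ J := by
  have hb3 : 0 < (5 / 3) ^ 5 * b ^ 3 := mul_pos (by norm_num) (pow_pos hb.1 3)
  have hK : 0 < (5 / 3) ^ 5 * b ^ 3 * (64 / 49 : ℝ) := mul_pos hb3 (by norm_num)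
  rw [← mul_assoc, ← ENNReal.ofReal_mul hb3.le] at h
  refine (ENNReal.mul_le_mul_iff_right (ENNReal.ofReal_pos.2 hK).ne' ENNReal.ofReal_ne_top).1
    (le_trans ?_ h)
  rw [← ENNReal.ofReal_mul hK.le]
  have hb32 : b ^ 3 ≤ b ^ 2 := pow_le_pow_of_le_one hb.1.le hb.2 (by norm_num)
  exact ENNReal.ofReal_le_ofReal (by nlinarith)

end Mania

/-- Lawrentiev gap for the Mania functional: every absolutely continuous
`u : [0,1] → ℝ` with `u(0) = 0`, `u(1) = 1` and finite kinetic energy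
`T[u] = ∫₀¹ u'² < ∞` satisfies `J[u] = ∫₀¹ (x − u³)² u'⁶ dx ≥ ½ (7/8)² (3/10)⁵`;
in particular `J + ε²T ≥ ½ (7/8)² (3/10)⁵` for every `ε > 0`. -/
theorem mania_lawrentiev_gap (u u' : ℝ → ℝ)
    (hrep : ∀ x ∈ Set.Icc (0 : ℝ) 1, u x = ∫ t in (0 : ℝ)..x, u' t)
    (hu'int : IntervalIntegrable u' volume 0 1)
    (hbc : u 1 = 1)
    (hT : IntervalIntegrable (fun t => u' t ^ 2) volume 0 1) :
    (ENNReal.ofReal ((1 / 2 : ℝ) * (7 / 8) ^ 2 * (3 / 10) ^ 5) ≤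
      ∫⁻ x in Set.Ioc (0 : ℝ) 1, ENNReal.ofReal ((x - u x ^ 3) ^ 2 * u' x ^ 6)) ∧
    ∀ ε : ℝ, 0 < ε →
      ENNReal.ofReal ((1 / 2 : ℝ) * (7 / 8) ^ 2 * (3 / 10) ^ 5) ≤
        (∫⁻ x in Set.Ioc (0 : ℝ) 1, ENNReal.ofReal ((x - u x ^ 3) ^ 2 * u' x ^ 6)) +
          ENNReal.ofReal (ε ^ 2 * ∫ t in (0 : ℝ)..1, u' t ^ 2) := by
  suffices key : ENNReal.ofReal ((1 / 2 : ℝ) * (7 / 8) ^ 2 * (3 / 10) ^ 5) ≤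
      ∫⁻ x in Ioc (0 : ℝ) 1, ENNReal.ofReal ((x - u x ^ 3) ^ 2 * u' x ^ 6) from
    ⟨key, fun _ _ => le_add_right key⟩
  have hcont : ContinuousOn u (Icc 0 1) := by
    have := intervalIntegral.continuousOn_primitive_interval' hu'int left_mem_uIcc
    rw [uIcc_of_le zero_le_one] at this
    exact this.congr hrep
  have hsmall : ∀ᶠ t in 𝓝[>] 0, u t ^ 3 - t / 8 < 0 := by
    filter_upwards [eventually_pow_three_lt_mul_of_sq_le (c := 1 / 8) (by norm_num)
      fun t ht => Mania.sq_le_mul_energy hrep hu'int hT ht] with t ht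
    linarith
  obtain ⟨b, hb, hub, hbelow⟩ := exists_first_nonneg_of_eventually_neg
    (g := fun t => u t ^ 3 - t / 8) zero_lt_one ((hcont.pow 3).sub (continuousOn_id.div_const 8))
    hsmall (by norm_num [hbc])
  have hu'meas : AEMeasurable u' (volume.restrict (Ioo 0 b)) :=
    (hu'int.1.mono_set (Ioo_subset_Ioc_self.trans (Ioc_subset_Ioc_right hb.2))).aemeasurable
  have hub' : u b = ∫ x in Ioo 0 b, u' x := by
    rw [hrep b ⟨hb.1.le, hb.2⟩, intervalIntegral.integral_of_le hb.1.le,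
      integral_Ioc_eq_integral_Ioo]
  refine Mania.constant_le_of_pow_six_le hb ?_
  calc ENNReal.ofReal (b ^ 2 / 64) ≤ ‖u b‖ₑ ^ 6 := by
        rw [Real.enorm_eq_ofReal_abs, ← ENNReal.ofReal_pow (abs_nonneg _), pow_abs,
          abs_of_nonneg (by positivity)]
        exact ENNReal.ofReal_le_ofReal (by nlinarith [hub, hb.1])
    _ ≤ (∫⁻ x in Ioo 0 b, ‖u' x‖ₑ) ^ 6 := by
        rw [hub']
        gcongr
        exact enorm_integral_le_lintegral_enorm _
    _ ≤ ENNReal.ofReal ((5 / 3) ^ 5 * b ^ 3) *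
          ∫⁻ x in Ioo 0 b, ENNReal.ofReal (x ^ 2 * u' x ^ 6) :=
        lintegral_Ioo_enorm_pow_six_le hb.1.le hu'meas
    _ ≤ _ := by
        gcongr
        exact (Mania.lintegral_sq_mul_pow_six_le hbelow).trans
          (by gcongr; exact Ioo_subset_Ioc_self.trans (Ioc_subset_Ioc_right hb.2))
end
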